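/- arXiv:1703.10495 — 5 statements merged into one kernel-verified Lean document; each statement's English description precedes it below -/
import Mathlib

section
/- Let Π be a finite projective plane and let F be a collineation group of Π. Then F is transitive on the points of Π if and only if F is transitive on the lines of Π. -/
/-- A collineation of an incidence structure: a bijection of the points together with a
bijection of the lines which preserve the incidence relation. -/
@[ext]
structure Collineation (P L : Type*) [Membership P L] where
  pointMap : P ≃ P
  lineMap : L ≃ L
  mem_map : ∀ (p : P) (l : L), pointMap p ∈ lineMap l ↔ p ∈ l

namespace Collineation

variable {P L : Type*} [Membership P L]

/-- Collineations form a group under composition. -/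
instance : Group (Collineation P L) where
  one := ⟨Equiv.refl P, Equiv.refl L, fun _ _ => Iff.rfl⟩
  mul f g := ⟨g.pointMap.trans f.pointMap, g.lineMap.trans f.lineMap,
    fun p l => by simp only [Equiv.trans_apply, f.mem_map, g.mem_map]⟩
  inv f := ⟨f.pointMap.symm, f.lineMap.symm, fun p l => by
    conv_rhs => rw [← f.pointMap.apply_symm_apply p, ← f.lineMap.apply_symm_apply l]
    exact (f.mem_map _ _).symm⟩
  mul_assoc f g h := by ext x <;> rfl
  one_mul f := by ext x <;> rfl
  mul_one f := by ext x <;> rfl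
  inv_mul_cancel f := by
    ext x
    · exact f.pointMap.symm_apply_apply x
    · exact f.lineMap.symm_apply_apply x

end Collineation

/-! Let `n` be the order of the plane, so that there are `n² + n + 1` points and lines, and every
line carries `n + 1` points. If `G` is transitive on the points, count the flags `(p, m)` with `m`
in the `G`-orbit `O` of a line: every point lies on the same number `k` of lines of `O`, so
`(n² + n + 1) k = |O| (n + 1)`. As `n² + n + 1 = n (n + 1) + 1` is coprime to `n + 1`, the number
`n² + n + 1` of lines divides `|O|`, hence `O` consists of all lines. The converse is the same
count with the roles of points and lines exchanged. -/

open Finset MulAction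

namespace MulAction

variable {G α β : Type*} [Group G] [MulAction G α] [MulAction G β]
  {r : α → β → Prop} [∀ a b, Decidable (r a b)]

theorem card_bipartiteAbove_eq_of_isPretransitive [IsPretransitive G α]
    (hr : ∀ (g : G) a b, r (g • a) (g • b) ↔ r a b) {t : Finset β}
    (ht : ∀ (g : G) b, g • b ∈ t ↔ b ∈ t) (a a' : α) :
    #(t.bipartiteAbove r a) = #(t.bipartiteAbove r a') := by
  obtain ⟨g, rfl⟩ := exists_smul_eq G a a'
  exact card_equiv (toPerm g) fun b => by simp [mem_bipartiteAbove, ht, hr]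

theorem card_dvd_card_mul_of_isPretransitive [Fintype α] [IsPretransitive G α]
    (hr : ∀ (g : G) a b, r (g • a) (g • b) ↔ r a b) {t : Finset β}
    (ht : ∀ (g : G) b, g • b ∈ t ↔ b ∈ t) {c : ℕ}
    (hc : ∀ b ∈ t, #(univ.bipartiteBelow r b) = c) :
    Fintype.card α ∣ #t * c := by
  rcases isEmpty_or_nonempty α with _ | ⟨⟨a₀⟩⟩
  · exact Dvd.intro 0 (card_mul_eq_card_mul r (m := 0) (fun a => isEmptyElim a) hc)
  · exact Dvd.intro _ (card_mul_eq_card_mul r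
      (fun a _ => card_bipartiteAbove_eq_of_isPretransitive hr ht a a₀) hc)

theorem isPretransitive_of_coprime [Fintype α] [Fintype β] [IsPretransitive G α]
    (hr : ∀ (g : G) a b, r (g • a) (g • b) ↔ r a b) {c : ℕ}
    (hc : ∀ b, #(univ.bipartiteBelow r b) = c) (hcop : (Fintype.card α).Coprime c)
    (hcard : Fintype.card β ≤ Fintype.card α) : IsPretransitive G β := by
  classical
  refine ⟨fun b b' => mem_orbit_iff.mp ?_⟩
  set t := (orbit G b).toFinset
  have ht (g : G) (x : β) : g • x ∈ t ↔ x ∈ t := by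
    simp only [t, Set.mem_toFinset, ← orbit_eq_iff, orbit_smul]
  have hdvd : Fintype.card α ∣ #t :=
    hcop.dvd_of_dvd_mul_right (card_dvd_card_mul_of_isPretransitive hr ht fun b _ => hc b)
  have hpos : 0 < #t := card_pos.mpr ⟨b, Set.mem_toFinset.mpr (mem_orbit_self b)⟩
  have ht_univ : t = univ :=
    eq_univ_of_card t ((card_le_univ t).antisymm (hcard.trans (Nat.le_of_dvd hpos hdvd)))
  have hb' : b' ∈ t := by rw [ht_univ]; exact mem_univ b'
  simpa [t] using hb'

end MulAction

namespace Configuration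

variable {P L : Type*} [Membership P L]

theorem card_bipartiteBelow_eq_pointCount [∀ (p : P) (l : L), Decidable (p ∈ l)] [Fintype P]
    (l : L) : #(univ.bipartiteBelow (· ∈ ·) l) = pointCount P l := by
  rw [pointCount, Nat.card_eq_fintype_card, Fintype.card_subtype, bipartiteBelow]

theorem card_bipartiteBelow_eq_lineCount [∀ (p : P) (l : L), Decidable (p ∈ l)] [Fintype L]
    (p : P) : #(univ.bipartiteBelow (fun (l : L) p => p ∈ l) p) = lineCount L p := by
  rw [lineCount, Nat.card_eq_fintype_card, Fintype.card_subtype, bipartiteBelow]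

theorem ProjectivePlane.coprime_card_points_order_add_one (P L : Type*) [Membership P L]
    [ProjectivePlane P L] [Fintype P] [Finite L] :
    (Fintype.card P).Coprime (ProjectivePlane.order P L + 1) := by
  rw [ProjectivePlane.card_points P L, sq, ← Nat.mul_add_one, Nat.coprime_mul_right_add_left]
  exact Nat.coprime_one_left _

end Configuration

namespace Collineation

variable {P L : Type*} [Membership P L]

instance : MulAction (Collineation P L) P where
  smul f p := f.pointMap p
  one_smul _ := rfl
  mul_smul _ _ _ := rfl

instance : MulAction (Collineation P L) L where
  smul f l := f.lineMap l
  one_smul _ := rfl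
  mul_smul _ _ _ := rfl

@[simp]
theorem smul_point_def (f : Collineation P L) (p : P) : f • p = f.pointMap p := rfl

@[simp]
theorem smul_line_def (f : Collineation P L) (l : L) : f • l = f.lineMap l := rfl

theorem smul_mem_smul_iff (f : Collineation P L) (p : P) (l : L) : f • p ∈ f • l ↔ p ∈ l :=
  f.mem_map p l

theorem isPretransitive_points_iff (F : Subgroup (Collineation P L)) :
    IsPretransitive F P ↔ ∀ p q : P, ∃ f ∈ F, f.pointMap p = q := by
  simp only [isPretransitive_iff, Subtype.exists, Subgroup.mk_smul, smul_point_def, exists_prop]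

theorem isPretransitive_lines_iff (F : Subgroup (Collineation P L)) :
    IsPretransitive F L ↔ ∀ l m : L, ∃ f ∈ F, f.lineMap l = m := by
  simp only [isPretransitive_iff, Subtype.exists, Subgroup.mk_smul, smul_line_def, exists_prop]

end Collineation

open Configuration ProjectivePlane in
/-- For a collineation group `F` of a finite projective plane,
`F` is transitive on points if and only if `F` is transitive on lines. -/
theorem point_transitive_iff_line_transitive
    (P L : Type*) [Membership P L] [Finite P] [Finite L]
    [Configuration.ProjectivePlane P L]
    (F : Subgroup (Collineation P L)) :
    (∀ p q : P, ∃ f ∈ F, f.pointMap p = q) ↔ (∀ l m : L, ∃ f ∈ F, f.lineMap l = m) := by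
  classical
  cases nonempty_fintype P
  cases nonempty_fintype L
  rw [← Collineation.isPretransitive_points_iff, ← Collineation.isPretransitive_lines_iff]
  have hcard := card_points_eq_card_lines P L
  have hcop := coprime_card_points_order_add_one P L
  constructor <;> intro _
  · exact isPretransitive_of_coprime (r := (· ∈ ·))
      (fun (f : F) => Collineation.smul_mem_smul_iff f.1)
      (fun l => (card_bipartiteBelow_eq_pointCount l).trans (pointCount_eq P l)) hcop hcard.ge
  · exact isPretransitive_of_coprime (r := fun l p => p ∈ l)
      (fun (f : F) l p => Collineation.smul_mem_smul_iff f.1 p l)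
      (fun p => (card_bipartiteBelow_eq_lineCount p).trans (lineCount_eq L p)) (hcard ▸ hcop)
      hcard.le
end

section
/- Let Π be a finite projective plane of prime order and let F be a collineation group of Π containing a non-trivial elation. Then either F is transitive on the points of Π, or F fixes a point of Π, or F fixes a line of Π. -/
/-- An elation with center `P₀` and axis `ℓ` (where `P₀` is incident with `ℓ`):
a collineation fixing every point incident with `ℓ` and every line incident with `P₀`. -/
def Collineation.IsElation {P L : Type*} [Membership P L]
    (f : Collineation P L) (P₀ : P) (ℓ : L) : Prop :=
  P₀ ∈ ℓ ∧ (∀ p : P, p ∈ ℓ → f.pointMap p = p) ∧ (∀ l : L, P₀ ∈ l → f.lineMap l = l)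


set_option linter.unusedSectionVars false
set_option linter.dupNamespace false
set_option maxHeartbeats 1000000

namespace Collineation

variable {P L : Type*} [Membership P L]

@[simp] lemma mul_pointMap (f g : Collineation P L) (x : P) :
    (f * g).pointMap x = f.pointMap (g.pointMap x) := rfl
@[simp] lemma mul_lineMap (f g : Collineation P L) (l : L) :
    (f * g).lineMap l = f.lineMap (g.lineMap l) := rfl
@[simp] lemma one_pointMap (x : P) : (1 : Collineation P L).pointMap x = x := rfl
@[simp] lemma one_lineMap (l : L) : (1 : Collineation P L).lineMap l = l := rfl
@[simp] lemma inv_pointMap (f : Collineation P L) (x : P) :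
    (f⁻¹).pointMap x = f.pointMap.symm x := rfl
@[simp] lemma inv_lineMap (f : Collineation P L) (l : L) :
    (f⁻¹).lineMap l = f.lineMap.symm l := rfl

lemma finite_ins [Finite P] [Finite L] : Finite (Collineation P L) := by
  have : Function.Injective (fun f : Collineation P L => (f.pointMap, f.lineMap)) := by
    intro f g h
    ext x
    · exact congrArg (fun e => e.1 x) h
    · exact congrArg (fun e => e.2 x) h
  exact Finite.of_injective _ this

end Collineation

open Configuration Configuration.ProjectivePlane

namespace PPlaneAux

variable {P L : Type*} [Membership P L] [Finite P] [Finite L] [ProjectivePlane P L]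

/-- the line joining two distinct points -/
noncomputable def join {x y : P} (h : x ≠ y) : L := HasLines.mkLine h

lemma left_mem_join {x y : P} (h : x ≠ y) : x ∈ (join h : L) := (HasLines.mkLine_ax h).1
lemma right_mem_join {x y : P} (h : x ≠ y) : y ∈ (join h : L) := (HasLines.mkLine_ax h).2

lemma line_unique {x y : P} {m m' : L} (h : x ≠ y) (hxm : x ∈ m) (hym : y ∈ m)
    (hxm' : x ∈ m') (hym' : y ∈ m') : m = m' :=
  (Nondegenerate.eq_or_eq hxm hym hxm' hym').resolve_left h

lemma eq_join {x y : P} {m : L} (h : x ≠ y) (hxm : x ∈ m) (hym : y ∈ m) : m = join h :=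
  line_unique h hxm hym (left_mem_join h) (right_mem_join h)

lemma pt_unique {x y : P} {m m' : L} (h : m ≠ m') (hxm : x ∈ m) (hxm' : x ∈ m')
    (hym : y ∈ m) (hym' : y ∈ m') : x = y :=
  (Nondegenerate.eq_or_eq hxm hym hxm' hym').resolve_right h

variable (P) in
lemma card_points' : Nat.card P = order P L ^ 2 + order P L + 1 := by
  have := Fintype.ofFinite P
  rw [Nat.card_eq_fintype_card]
  exact card_points P L

lemma card_line_points (l : L) : Nat.card {x : P // x ∈ l} = order P L + 1 := by
  have h := pointCount_eq P l
  rwa [pointCount] at h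

/-- three distinct points on every line -/
lemma exists_three_on_line (l : L) :
    ∃ x y z : P, x ∈ l ∧ y ∈ l ∧ z ∈ l ∧ x ≠ y ∧ x ≠ z ∧ y ≠ z := by
  have := Fintype.ofFinite {x : P // x ∈ l}
  have h2 : 2 < Fintype.card {x : P // x ∈ l} := by
    rw [← Nat.card_eq_fintype_card, card_line_points]
    have := one_lt_order P L
    omega
  obtain ⟨⟨x, hx⟩, ⟨y, hy⟩, ⟨z, hz⟩, hxy, hxz, hyz⟩ := Fintype.two_lt_card_iff.1 h2
  exact ⟨x, y, z, hx, hy, hz, by simpa using hxy, by simpa using hxz, by simpa using hyz⟩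

/-- three distinct lines through every point -/
lemma exists_three_through_point (x : P) :
    ∃ l m n : L, x ∈ l ∧ x ∈ m ∧ x ∈ n ∧ l ≠ m ∧ l ≠ n ∧ m ≠ n := by
  have := Fintype.ofFinite {l : L // x ∈ l}
  have h2 : 2 < Fintype.card {l : L // x ∈ l} := by
    rw [← Nat.card_eq_fintype_card]
    have h := lineCount_eq L x
    rw [lineCount] at h
    rw [h]
    have := one_lt_order P L
    omega
  obtain ⟨⟨a, ha⟩, ⟨b, hb⟩, ⟨c, hc⟩, hab, hac, hbc⟩ := Fintype.two_lt_card_iff.1 h2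
  exact ⟨a, b, c, ha, hb, hc, by simpa using hab, by simpa using hac, by simpa using hbc⟩

/-- second point on a line distinct from a given point -/
lemma exists_second_on_line (l : L) (x : P) : ∃ y : P, y ∈ l ∧ y ≠ x := by
  obtain ⟨a, b, c, ha, hb, hc, hab, hac, hbc⟩ := exists_three_on_line (P := P) l
  rcases eq_or_ne a x with rfl | h
  · exact ⟨b, hb, hab.symm⟩
  · exact ⟨a, ha, h⟩

lemma exists_two_lines_through (x : P) (l : L) :
    ∃ m n : L, x ∈ m ∧ x ∈ n ∧ m ≠ n ∧ m ≠ l ∧ n ≠ l := by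
  obtain ⟨a, b, c, ha, hb, hc, hab, hac, hbc⟩ := exists_three_through_point (L := L) x
  rcases eq_or_ne a l with rfl | h
  · exact ⟨b, c, hb, hc, hbc, hab.symm, hac.symm⟩
  · rcases eq_or_ne b l with rfl | h'
    · exact ⟨a, c, ha, hc, hac, h, hbc.symm⟩
    · exact ⟨a, b, ha, hb, hab, h, h'⟩

end PPlaneAux


namespace PPlaneAux

open Collineation

variable {P L : Type*} [Membership P L] [Finite P] [Finite L] [ProjectivePlane P L]

lemma elation_pow {e : Collineation P L} {c : P} {a : L} (he : e.IsElation c a) (k : ℕ) :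
    (e ^ k).IsElation c a := by
  induction k with
  | zero => exact ⟨he.1, fun p _ => rfl, fun l _ => rfl⟩
  | succ k ih =>
    refine ⟨he.1, fun p hp => ?_, fun l hl => ?_⟩
    · rw [pow_succ, mul_pointMap, he.2.1 p hp, ih.2.1 p hp]
    · rw [pow_succ, mul_lineMap, he.2.2 l hl, ih.2.2 l hl]

/-- Rigidity: an elation fixing a point off its axis is the identity. -/
lemma elation_rigid {h : Collineation P L} {c : P} {a : L}
    (he : h.IsElation c a) {x : P} (hx : x ∉ a) (hfix : h.pointMap x = x) : h = 1 := by
  obtain ⟨hca, hpts, hlines⟩ := he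
  have hxc : x ≠ c := fun hh => hx (hh ▸ hca)
  -- step 1 : all lines through x are fixed
  have step1 : ∀ m : L, x ∈ m → h.lineMap m = m := by
    intro m hm
    have hma : m ≠ a := fun hh => hx (hh ▸ hm)
    set y : P := HasPoints.mkPoint hma with hy
    obtain ⟨hy1, hy2⟩ : y ∈ m ∧ y ∈ a := HasPoints.mkPoint_ax (P := P) hma
    have hyx : y ≠ x := fun hh => hx (hh ▸ hy2)
    have h1 : x ∈ h.lineMap m := by
      have := (h.mem_map x m).2 hm; rwa [hfix] at this
    have h2 : y ∈ h.lineMap m := by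
      have := (h.mem_map y m).2 hy1; rwa [hpts y hy2] at this
    exact line_unique hyx.symm h1 h2 hm hy1
  -- step 2 : all points off the line x∨c are fixed
  have step2 : ∀ z : P, z ∉ (join hxc : L) → h.pointMap z = z := by
    intro z hz
    have hzx : z ≠ x := fun hh => hz (by rw [hh]; exact left_mem_join hxc)
    have hzc : z ≠ c := fun hh => hz (by rw [hh]; exact right_mem_join hxc)
    have hm1 : h.lineMap (join hzx : L) = join hzx := step1 _ (right_mem_join hzx)
    have hm2 : h.lineMap (join hzc : L) = join hzc := hlines _ (right_mem_join hzc)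
    have hne : (join hzx : L) ≠ join hzc := by
      intro hh
      apply hz
      have hcx : c ∈ (join hzx : L) := hh ▸ right_mem_join hzc
      have : (join hzx : L) = join hxc :=
        line_unique hxc (right_mem_join hzx) hcx (left_mem_join hxc) (right_mem_join hxc)
      exact this ▸ left_mem_join hzx
    have hz1 : h.pointMap z ∈ (join hzx : L) := by
      have := (h.mem_map z (join hzx)).2 (left_mem_join hzx); rwa [hm1] at this
    have hz2 : h.pointMap z ∈ (join hzc : L) := by
      have := (h.mem_map z (join hzc)).2 (left_mem_join hzc); rwa [hm2] at this
    exact pt_unique hne hz1 hz2 (left_mem_join hzx) (left_mem_join hzc)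
  -- step 3 : every line with two fixed points is fixed; points on x∨c are fixed
  have fixline : ∀ m : L, ∀ u v : P, u ≠ v → u ∈ m → v ∈ m →
      h.pointMap u = u → h.pointMap v = v → h.lineMap m = m := by
    intro m u v huv hu hv hfu hfv
    have h1 : u ∈ h.lineMap m := by have := (h.mem_map u m).2 hu; rwa [hfu] at this
    have h2 : v ∈ h.lineMap m := by have := (h.mem_map v m).2 hv; rwa [hfv] at this
    exact line_unique huv h1 h2 hu hv
  have step3 : ∀ z : P, h.pointMap z = z := by
    intro z
    by_cases hz : z ∉ (join hxc : L)
    · exact step2 z hz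
    push_neg at hz
    -- z on the line ℓ₀ = x∨c
    set ℓ₀ : L := join hxc with hl0
    obtain ⟨m, n, hzm, hzn, hmn, hml, hnl⟩ := exists_two_lines_through (P := P) z ℓ₀
    have fixthru : ∀ m' : L, z ∈ m' → m' ≠ ℓ₀ → h.lineMap m' = m' := by
      intro m' hzm' hm'l
      -- find two points of m' other than z ; they are off ℓ₀
      obtain ⟨p₁, p₂, p₃, hp₁, hp₂, hp₃, h12, h13, h23⟩ := exists_three_on_line (P := P) m'
      have key : ∀ w : P, w ∈ m' → w ≠ z → h.pointMap w = w := by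
        intro w hw hwz
        refine step2 w (fun hwl => hwz ?_)
        exact pt_unique hm'l hw hwl hzm' hz
      rcases eq_or_ne p₁ z with rfl | h1z
      · exact fixline m' p₂ p₃ h23 hp₂ hp₃ (key p₂ hp₂ h12.symm) (key p₃ hp₃ h13.symm)
      · rcases eq_or_ne p₂ z with rfl | h2z
        · exact fixline m' p₁ p₃ h13 hp₁ hp₃ (key p₁ hp₁ h1z) (key p₃ hp₃ h23.symm)
        · exact fixline m' p₁ p₂ h12 hp₁ hp₂ (key p₁ hp₁ h1z) (key p₂ hp₂ h2z)
    have hm : h.lineMap m = m := fixthru m hzm hml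
    have hn : h.lineMap n = n := fixthru n hzn hnl
    have hz1 : h.pointMap z ∈ m := by have := (h.mem_map z m).2 hzm; rwa [hm] at this
    have hz2 : h.pointMap z ∈ n := by have := (h.mem_map z n).2 hzn; rwa [hn] at this
    exact pt_unique hmn hz1 hz2 hzm hzn
  -- conclude
  have lfix : ∀ l : L, h.lineMap l = l := by
    intro l
    obtain ⟨p₁, p₂, p₃, hp₁, hp₂, hp₃, h12, _, _⟩ := exists_three_on_line (P := P) l
    exact fixline l p₁ p₂ h12 hp₁ hp₂ (step3 p₁) (step3 p₂)
  ext z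
  · exact step3 z
  · exact lfix z

end PPlaneAux


namespace PPlaneAux

open Collineation

variable {P L : Type*} [Membership P L] [Finite P] [Finite L] [ProjectivePlane P L]

/-- An elation of a plane of prime order acts transitively on each punctured line
through its center (off the axis). -/
lemma elation_orbit_line (hp : (order P L).Prime) {e : Collineation P L} {c : P} {a : L}
    (he : e.IsElation c a) (hne : e ≠ 1) {x y : P} (hx : x ∉ a) (hxc : x ≠ c)
    (hy : y ∈ (join hxc : L)) (hyc : y ≠ c) :
    ∃ k : ℕ, (e ^ k).pointMap x = y := by
  classical
  have : Fintype P := Fintype.ofFinite P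
  have : Finite (Collineation P L) := finite_ins
  obtain ⟨hca, hpts, hlines⟩ := id he
  set ℓ : L := join hxc with hldef
  have hxl : x ∈ ℓ := left_mem_join hxc
  have hcl : c ∈ ℓ := right_mem_join hxc
  have hla : ℓ ≠ a := fun hh => hx (hh ▸ hxl)
  have hfixc : ∀ k : ℕ, (e ^ k).pointMap c = c := fun k => (elation_pow he k).2.1 c hca
  have hfixl : ∀ k : ℕ, (e ^ k).lineMap ℓ = ℓ := fun k => (elation_pow he k).2.2 ℓ hcl
  set S : Finset P := (Set.toFinset {z : P | z ∈ ℓ}).erase c with hSdef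
  have hmemS : ∀ z : P, z ∈ S ↔ z ∈ ℓ ∧ z ≠ c := by
    intro z
    simp only [hSdef, Finset.mem_erase, Set.mem_toFinset, Set.mem_setOf_eq]
    tauto
  have hScard : S.card = order P L := by
    have h1 : (Set.toFinset {z : P | z ∈ ℓ}).card = order P L + 1 := by
      rw [Set.toFinset_card]
      have := card_line_points (P := P) ℓ
      rwa [Nat.card_eq_fintype_card] at this
    rw [hSdef, Finset.card_erase_of_mem (by simpa using hcl), h1]
    omega
  have hSa : ∀ z ∈ S, z ∉ a := by
    intro z hz ha
    obtain ⟨hzl, hzc⟩ := (hmemS z).1 hz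
    exact hzc (pt_unique hla hzl ha hcl hca)
  have hSmem : ∀ z ∈ S, ∀ k : ℕ, (e ^ k).pointMap z ∈ S := by
    intro z hz k
    obtain ⟨hzl, hzc⟩ := (hmemS z).1 hz
    refine (hmemS _).2 ⟨?_, ?_⟩
    · have := ((e ^ k).mem_map z ℓ).2 hzl
      rwa [hfixl k] at this
    · intro hh
      exact hzc ((e ^ k).pointMap.injective (by rw [hh, hfixc k]))
  have hfree : ∀ z ∈ S, ∀ k : ℕ, (e ^ k).pointMap z = z → e ^ k = 1 := by
    intro z hz k hfix
    exact elation_rigid (elation_pow he k) (hSa z hz) hfix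
  set n := orderOf e with hndef
  have hn : 0 < n := orderOf_pos e
  set orb : P → Finset P := fun z =>
    Finset.image (fun k : Fin n => (e ^ (k : ℕ)).pointMap z) Finset.univ with horbdef
  have hself : ∀ z : P, z ∈ orb z := by
    intro z
    exact Finset.mem_image.2 ⟨⟨0, hn⟩, Finset.mem_univ _, by simp⟩
  have horbsub : ∀ z ∈ S, orb z ⊆ S := by
    intro z hz w hw
    obtain ⟨k, -, rfl⟩ := Finset.mem_image.1 hw
    exact hSmem z hz k
  have hshift : ∀ z : P, ∀ j : ℕ, (e ^ j).pointMap z ∈ orb z := by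
    intro z j
    refine Finset.mem_image.2 ⟨⟨j % n, Nat.mod_lt _ hn⟩, Finset.mem_univ _, ?_⟩
    show (e ^ (j % n)).pointMap z = (e ^ j).pointMap z
    rw [hndef, pow_mod_orderOf]
  have hcancel : ∀ z ∈ S, ∀ i j : ℕ, i ≤ j → j < n →
      (e ^ i).pointMap z = (e ^ j).pointMap z → i = j := by
    intro z hz i j hij hjn heq
    have h0 : (e ^ (j - i)).pointMap ((e ^ i).pointMap z) = (e ^ i).pointMap z := by
      rw [← mul_pointMap, ← pow_add, Nat.sub_add_cancel hij, heq]
    have h1 := hfree _ (hSmem z hz i) _ h0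
    have hdvd : n ∣ j - i := orderOf_dvd_of_pow_eq_one h1
    have h2 : j - i = 0 := Nat.eq_zero_of_dvd_of_lt hdvd
      (lt_of_le_of_lt (Nat.sub_le _ _) hjn) |>.symm ▸ rfl
    omega
  have horbcard : ∀ z ∈ S, (orb z).card = n := by
    intro z hz
    rw [horbdef]
    rw [Finset.card_image_of_injOn, Finset.card_univ, Fintype.card_fin]
    intro k _ k' _ hkk'
    rcases le_total (k : ℕ) (k' : ℕ) with hle | hle
    · exact Fin.ext (hcancel z hz _ _ hle k'.2 hkk')
    · exact (Fin.ext (hcancel z hz _ _ hle k.2 hkk'.symm)).symm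
  have horb_mono : ∀ z : P, ∀ w ∈ orb z, orb w ⊆ orb z := by
    intro z w hw u hu
    obtain ⟨j, -, rfl⟩ := Finset.mem_image.1 hw
    obtain ⟨i, -, rfl⟩ := Finset.mem_image.1 hu
    have : (e ^ (i : ℕ)).pointMap ((e ^ (j : ℕ)).pointMap z) =
        (e ^ ((i : ℕ) + (j : ℕ))).pointMap z := by
      rw [pow_add, mul_pointMap]
    rw [this]
    exact hshift z _
  have horb_symm : ∀ z : P, ∀ w ∈ orb z, z ∈ orb w := by
    intro z w hw
    obtain ⟨j, -, rfl⟩ := Finset.mem_image.1 hw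
    have : (e ^ (n - (j : ℕ))).pointMap ((e ^ (j : ℕ)).pointMap z) = z := by
      rw [← mul_pointMap, ← pow_add, Nat.sub_add_cancel (le_of_lt j.2), hndef,
        pow_orderOf_eq_one, one_pointMap]
    have hmem := hshift ((e ^ (j : ℕ)).pointMap z) (n - (j : ℕ))
    rwa [this] at hmem
  have horb_eq : ∀ z : P, ∀ w ∈ orb z, orb w = orb z := by
    intro z w hw
    exact subset_antisymm (horb_mono z w hw) (horb_mono w z (horb_symm z w hw))
  have hdvd : n ∣ order P L := by
    have key := Finset.card_eq_sum_card_fiberwise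
      (fun z (hz : z ∈ S) => Finset.mem_image_of_mem orb hz)
    have hfib : ∀ b ∈ S.image orb, (S.filter fun z => orb z = b) = b := by
      intro b hb
      obtain ⟨z₀, hz₀, rfl⟩ := Finset.mem_image.1 hb
      ext w
      simp only [Finset.mem_filter]
      constructor
      · rintro ⟨hwS, hw⟩
        rw [← hw]
        exact hself w
      · intro hw
        exact ⟨horbsub z₀ hz₀ hw, horb_eq z₀ w hw⟩
    have hsum : ∀ b ∈ S.image orb, (S.filter fun z => orb z = b).card = n := by
      intro b hb
      obtain ⟨z₀, hz₀, hb'⟩ := Finset.mem_image.1 hb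
      rw [hfib b hb, ← hb', horbcard z₀ hz₀]
    rw [← hScard, key, Finset.sum_congr rfl hsum, Finset.sum_const, smul_eq_mul]
    exact dvd_mul_left n _
  have hneq : n = order P L := by
    rcases hp.eq_one_or_self_of_dvd n hdvd with h1 | h1
    · exact absurd (orderOf_eq_one_iff.1 h1) hne
    · exact h1
  have hxS : x ∈ S := (hmemS x).2 ⟨hxl, hxc⟩
  have hyS : y ∈ S := (hmemS y).2 ⟨hy, hyc⟩
  have horbx : orb x = S := by
    refine Finset.eq_of_subset_of_card_le (horbsub x hxS) ?_
    rw [hScard, horbcard x hxS, hneq]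
  rw [← horbx] at hyS
  obtain ⟨k, -, hk⟩ := Finset.mem_image.1 hyS
  exact ⟨(k : ℕ), hk⟩

end PPlaneAux


namespace PPlaneAux

variable {P L : Type*} [Membership P L] [Finite P] [Finite L] [ProjectivePlane P L]

lemma join_swap {x y : P} (h : x ≠ y) : (join h : L) = join h.symm :=
  line_unique h (left_mem_join h) (right_mem_join h)
    (right_mem_join h.symm) (left_mem_join h.symm)

lemma exists_other_on_line (m : L) (t c : P) : ∃ z : P, z ∈ m ∧ z ≠ t ∧ z ≠ c := by
  obtain ⟨a, b, d, ha, hb, hd, hab, had, hbd⟩ := exists_three_on_line (P := P) m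
  rcases eq_or_ne a t with rfl | hat
  · rcases eq_or_ne b c with rfl | hbc
    · exact ⟨d, hd, had.symm, hbd.symm⟩
    · exact ⟨b, hb, hab.symm, hbc⟩
  · rcases eq_or_ne a c with rfl | hac
    · rcases eq_or_ne b t with rfl | hbt
      · exact ⟨d, hd, hbd.symm, had.symm⟩
      · exact ⟨b, hb, hbt, hab.symm⟩
    · exact ⟨a, ha, hat, hac⟩

open scoped Classical in
noncomputable def lineFinset [Fintype P] (m : L) : Finset P := Set.toFinset {z : P | z ∈ m}

lemma mem_lineFinset [Fintype P] {m : L} {z : P} : z ∈ lineFinset (P := P) m ↔ z ∈ m := by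
  simp [lineFinset]

lemma lineFinset_card [Fintype P] (m : L) : (lineFinset (P := P) m).card = order P L + 1 := by
  classical
  rw [lineFinset, Set.toFinset_card]
  have := card_line_points (P := P) m
  rwa [Nat.card_eq_fintype_card] at this

/-- In a plane of order 2, a line has a unique third point. -/
lemma third_point_unique (hN : order P L = 2) {m : L} {u v z z' : P}
    (huv : u ≠ v) (hu : u ∈ m) (hv : v ∈ m)
    (hz : z ∈ m) (hzu : z ≠ u) (hzv : z ≠ v)
    (hz' : z' ∈ m) (hz'u : z' ≠ u) (hz'v : z' ≠ v) : z = z' := by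
  classical
  have : Fintype P := Fintype.ofFinite P
  by_contra hzz'
  have hsub : ({u, v, z, z'} : Finset P) ⊆ lineFinset m := by
    intro w hw
    simp only [Finset.mem_insert, Finset.mem_singleton] at hw
    rcases hw with rfl | rfl | rfl | rfl <;> simp [mem_lineFinset, hu, hv, hz, hz']
  have hcard : ({u, v, z, z'} : Finset P).card = 4 := by
    rw [Finset.card_insert_of_notMem (by simp [huv, hzu.symm, hz'u.symm]),
      Finset.card_insert_of_notMem (by simp [hzv.symm, hz'v.symm]),
      Finset.card_insert_of_notMem (by simp [hzz']), Finset.card_singleton]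
  have := Finset.card_le_card hsub
  rw [hcard, lineFinset_card, hN] at this
  omega

end PPlaneAux


namespace PPlaneAux

variable {P L : Type*} [Membership P L] [Finite P] [Finite L] [ProjectivePlane P L]

/-- The key counting bound: a "closed" nonempty class has at least `N² - N + 1` points. -/
lemma class_lower_bound (Φ : P → L → Prop)
    (hΦflag : ∀ c a, Φ c a → c ∈ a)
    (K : Set P)
    (hKmove : ∀ c (a : L), Φ c a → ∀ x ∈ K, x ∉ a → ∀ (hxc : x ≠ c),
      ∀ y, y ∈ (join hxc : L) → y ≠ c → y ∈ K)
    (x : P) (hxK : x ∈ K)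
    (hAx : ∃ c a, Φ c a ∧ x ∉ a)
    (hCe : ∀ m : L, ∃ c a, Φ c a ∧ c ∉ m) :
    order P L ^ 2 - order P L + 1 ≤ K.ncard := by
  classical
  have : Fintype P := Fintype.ofFinite P
  set N := order P L with hNdef
  have hN1 : 1 ≤ N := le_of_lt (one_lt_order P L)
  obtain ⟨c, a, hφ, hxa⟩ := hAx
  have hca : c ∈ a := hΦflag c a hφ
  have hxc : x ≠ c := fun h => hxa (h ▸ hca)
  set ℓ : L := join hxc with hldef
  have hxl : x ∈ ℓ := left_mem_join hxc
  have hcl : c ∈ ℓ := right_mem_join hxc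
  -- the punctured line is inside K
  have hPl : ∀ y : P, y ∈ ℓ → y ≠ c → y ∈ K := fun y hy hyc =>
    hKmove c a hφ x hxK hxa hxc y hy hyc
  obtain ⟨c', a', hφ', hc'l⟩ := hCe ℓ
  have hc'a' : c' ∈ a' := hΦflag c' a' hφ'
  have ha'l : a' ≠ ℓ := fun h => hc'l (h ▸ hc'a')
  set s : P := HasPoints.mkPoint ha'l with hsdef
  obtain ⟨hsa', hsl⟩ : s ∈ a' ∧ s ∈ ℓ := HasPoints.mkPoint_ax (P := P) ha'l
  -- W : the double-punctured line
  set W : Finset P := ((lineFinset (P := P) ℓ).erase c).erase s with hWdef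
  have hmemW : ∀ z : P, z ∈ W ↔ z ∈ ℓ ∧ z ≠ c ∧ z ≠ s := by
    intro z
    simp only [hWdef, Finset.mem_erase, mem_lineFinset]
    tauto
  -- members of W are in K, off a', and distinct from c'
  have hWK : ∀ w ∈ W, w ∈ K := fun w hw =>
    hPl w ((hmemW w).1 hw).1 ((hmemW w).1 hw).2.1
  have hWa' : ∀ w ∈ W, w ∉ a' := by
    intro w hw hwa'
    obtain ⟨hwl, -, hws⟩ := (hmemW w).1 hw
    exact hws (pt_unique ha'l hwa' hwl hsa' hsl)
  have hWc' : ∀ w ∈ W, w ≠ c' := fun w hw h =>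
    hc'l (h ▸ ((hmemW w).1 hw).1)
  -- the pencil of punctured lines through c'
  set Q : P → Finset P := fun w =>
    if h : w ≠ c' then (lineFinset (P := P) ((join h : L))).erase c' else ∅ with hQdef
  have hQcard : ∀ w ∈ W, (Q w).card = N := by
    intro w hw
    rw [hQdef]
    simp only [dif_pos (hWc' w hw)]
    rw [Finset.card_erase_of_mem (by
      rw [mem_lineFinset]; exact right_mem_join (hWc' w hw)), lineFinset_card, ← hNdef]
    omega
  have hmemQ : ∀ w (hwc' : w ≠ c') , ∀ z : P,
      z ∈ Q w ↔ z ∈ (join hwc' : L) ∧ z ≠ c' := by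
    intro w hwc' z
    rw [hQdef]
    simp only [dif_pos hwc', Finset.mem_erase, mem_lineFinset]
    tauto
  have hQK : ∀ w ∈ W, ∀ z ∈ Q w, z ∈ K := by
    intro w hw z hz
    obtain ⟨hzj, hzc'⟩ := (hmemQ w (hWc' w hw) z).1 hz
    exact hKmove c' a' hφ' w (hWK w hw) (hWa' w hw) (hWc' w hw) z hzj hzc'
  -- lines (join w c') for w ∈ W meet ℓ only in w
  have hjl : ∀ w (hwc' : w ≠ c'), (join hwc' : L) ≠ ℓ := by
    intro w hwc' h
    exact hc'l (h ▸ right_mem_join hwc')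
  have hdisjQ : ∀ w ∈ W, ∀ w' ∈ W, w ≠ w' → Disjoint (Q w) (Q w') := by
    intro w hw w' hw' hww'
    rw [Finset.disjoint_left]
    intro z hz hz'
    obtain ⟨hzj, hzc'⟩ := (hmemQ w (hWc' w hw) z).1 hz
    obtain ⟨hzj', -⟩ := (hmemQ w' (hWc' w' hw') z).1 hz'
    have hlines : (join (hWc' w hw) : L) ≠ join (hWc' w' hw') := by
      intro h
      have hw'j : w' ∈ (join (hWc' w hw) : L) := h ▸ left_mem_join (hWc' w' hw')
      have hww : w' = w := pt_unique (hjl w (hWc' w hw)) hw'j ((hmemW w').1 hw').1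
        (left_mem_join (hWc' w hw)) ((hmemW w).1 hw).1
      exact hww' hww.symm
    exact hzc' (pt_unique hlines hzj hzj' (right_mem_join (hWc' w hw))
      (right_mem_join (hWc' w' hw')))
  set T : Finset P := W.biUnion Q with hTdef
  have hTcard : T.card = W.card * N := by
    rw [hTdef, Finset.card_biUnion hdisjQ]
    rw [Finset.sum_congr rfl hQcard, Finset.sum_const, smul_eq_mul]
  have hTK : ∀ z ∈ T, z ∈ K := by
    intro z hz
    obtain ⟨w, hw, hzw⟩ := Finset.mem_biUnion.1 hz
    exact hQK w hw z hzw
  -- cardinal of K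
  have hKfin : K.Finite := Set.toFinite K
  have hcards : ∀ s : Finset P, (∀ z ∈ s, z ∈ K) → s.card ≤ K.ncard := by
    intro s hs
    rw [Set.ncard_eq_toFinset_card' K]
    exact Finset.card_le_card (fun z hz => Set.mem_toFinset.2 (hs z hz))
  by_cases hsc : s = c
  · -- W is the whole punctured line, of size N
    have hWcard : W.card = N := by
      rw [hWdef, hsc, Finset.erase_idem, Finset.card_erase_of_mem (by
        rw [mem_lineFinset]; exact hcl), lineFinset_card, ← hNdef]
      omega
    have h1 : T.card ≤ K.ncard := hcards T hTK
    rw [hTcard, hWcard, ← sq] at h1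
    have hNN : N ≤ N ^ 2 := Nat.le_self_pow (by norm_num) N
    omega
  · -- W has size N - 1, but s itself is an extra element of K
    have hWcard : W.card = N - 1 := by
      have hsmem : s ∈ (lineFinset (P := P) ℓ).erase c := by
        rw [Finset.mem_erase, mem_lineFinset]; exact ⟨hsc, hsl⟩
      rw [hWdef, Finset.card_erase_of_mem hsmem, Finset.card_erase_of_mem (by
        rw [mem_lineFinset]; exact hcl), lineFinset_card, ← hNdef]
      omega
    have hsK : s ∈ K := hPl s hsl hsc
    have hsT : s ∉ T := by
      intro hs
      obtain ⟨w, hw, hzw⟩ := Finset.mem_biUnion.1 hs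
      obtain ⟨hsj, -⟩ := (hmemQ w (hWc' w hw) s).1 hzw
      have : s = w := pt_unique (hjl w (hWc' w hw)) hsj hsl
        (left_mem_join (hWc' w hw)) ((hmemW w).1 hw).1
      exact ((hmemW w).1 hw).2.2 (this ▸ rfl)
    have := hcards (insert s T) (by
      intro z hz
      rcases Finset.mem_insert.1 hz with rfl | hz
      · exact hsK
      · exact hTK z hz)
    rw [Finset.card_insert_of_notMem hsT, hTcard, hWcard] at this
    have hsq : N ^ 2 - N + 1 ≤ (N - 1) * N + 1 := by
      rw [tsub_mul, one_mul, ← sq]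
    omega

end PPlaneAux


namespace PPlaneAux

variable {P L : Type*} [Membership P L] [Finite P] [Finite L] [ProjectivePlane P L]

/-- In a plane of order 2, no closed class can have exactly three points. -/
lemma no_three_class (hN : order P L = 2) (Φ : P → L → Prop)
    (hΦflag : ∀ c a, Φ c a → c ∈ a)
    (hCe : ∀ m : L, ∃ c a, Φ c a ∧ c ∉ m)
    (K : Set P)
    (hKmove : ∀ c (a : L), Φ c a → ∀ x ∈ K, x ∉ a → ∀ (hxc : x ≠ c),
      ∀ y, y ∈ (join hxc : L) → y ≠ c → y ∈ K)
    (hK3 : K.ncard = 3) : False := by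
  classical
  obtain ⟨u, v, w, huv, huw, hvw, hKeq⟩ := Set.ncard_eq_three.1 hK3
  have huK : u ∈ K := by rw [hKeq]; exact Set.mem_insert _ _
  have hvK : v ∈ K := by rw [hKeq]; simp
  have hwK : w ∈ K := by rw [hKeq]; simp
  have hKmem : ∀ t ∈ K, t = u ∨ t = v ∨ t = w := by
    intro t ht; rw [hKeq] at ht; simpa using ht
  -- the pair lemma : each flag whose axis misses a point of K has its
  -- center on a secant of K
  have pairlem : ∀ c (a : L), Φ c a → ∀ t ∈ K, t ∉ a →
      ∃ t' : P, ∃ h : t' ≠ t, t' ∈ K ∧ t' ≠ c ∧ c ∈ (join h : L) ∧ c ≠ t := by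
    intro c a hφ t htK hta
    have hca : c ∈ a := hΦflag c a hφ
    have htc : t ≠ c := fun h => hta (h ▸ hca)
    obtain ⟨t', ht'j, ht't, ht'c⟩ := exists_other_on_line (P := P) (join htc : L) t c
    have ht'K : t' ∈ K := hKmove c a hφ t htK hta htc t' ht'j ht'c
    refine ⟨t', ht't, ht'K, ht'c, ?_, htc.symm⟩
    have : (join ht't : L) = join htc :=
      line_unique ht't (left_mem_join ht't) (right_mem_join ht't) ht'j (left_mem_join htc)
    rw [this]
    exact right_mem_join htc
  by_cases hcol : ∃ d : L, u ∈ d ∧ v ∈ d ∧ w ∈ d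
  · -- collinear case
    obtain ⟨d, hud, hvd, hwd⟩ := hcol
    have hKd : ∀ t ∈ K, t ∈ d := by
      intro t ht
      rcases hKmem t ht with rfl | rfl | rfl <;> assumption
    have hctr : ∀ c a, Φ c a → c ∈ d := by
      intro c a hφ
      by_cases hall : u ∈ a ∧ v ∈ a ∧ w ∈ a
      · have : a = d := line_unique huv hall.1 hall.2.1 hud hvd
        exact this ▸ hΦflag c a hφ
      · have : ∃ t ∈ K, t ∉ a := by
          by_contra hxx
          push_neg at hxx
          exact hall ⟨hxx u huK, hxx v hvK, hxx w hwK⟩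
        obtain ⟨t, htK, hta⟩ := this
        obtain ⟨t', ht't, ht'K, -, hcj, -⟩ := pairlem c a hφ t htK hta
        have : (join ht't : L) = d :=
          line_unique ht't (left_mem_join ht't) (right_mem_join ht't)
            (hKd t' ht'K) (hKd t htK)
        exact this ▸ hcj
    obtain ⟨c, a, hφ, hcd⟩ := hCe d
    exact hcd (hctr c a hφ)
  · -- triangle case
    have hwuv : w ∉ (join huv : L) := fun h => hcol ⟨join huv, left_mem_join huv, right_mem_join huv, h⟩
    have hvuw : v ∉ (join huw : L) := fun h => hcol ⟨join huw, left_mem_join huw, h, right_mem_join huw⟩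
    have huvw : u ∉ (join hvw : L) := fun h => hcol ⟨join hvw, h, left_mem_join hvw, right_mem_join hvw⟩
    have hjuv_uw : (join huv : L) ≠ join huw := fun h => hwuv (h ▸ right_mem_join huw)
    have hjuv_vw : (join huv : L) ≠ join hvw := fun h => hwuv (h ▸ right_mem_join hvw)
    have hjuw_vw : (join huw : L) ≠ join hvw := fun h => hvuw (h ▸ left_mem_join hvw)
    -- third points of the three sides
    obtain ⟨zuv, hzuv_mem, hzuv_u, hzuv_v⟩ := exists_other_on_line (P := P) (join huv : L) u v
    obtain ⟨zuw, hzuw_mem, hzuw_u, hzuw_w⟩ := exists_other_on_line (P := P) (join huw : L) u w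
    obtain ⟨zvw, hzvw_mem, hzvw_v, hzvw_w⟩ := exists_other_on_line (P := P) (join hvw : L) v w
    -- distinctness of the diagonal points
    have hzz : zuv ≠ zuw := by
      intro h
      exact hzuv_u (pt_unique hjuv_uw hzuv_mem (h ▸ hzuw_mem) (left_mem_join huv) (left_mem_join huw))
    set d : L := join hzz with hddef
    -- z_vw lies on d as well
    have hzvw_d : zvw ∈ d := by
      have hmd : d ≠ join hvw := by
        intro h
        exact hzuv_v (pt_unique hjuv_vw hzuv_mem (h ▸ left_mem_join hzz)
          (right_mem_join huv) (left_mem_join hvw))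
      obtain ⟨hζ1, hζ2⟩ : HasPoints.mkPoint hmd ∈ d ∧ HasPoints.mkPoint hmd ∈ (join hvw : L) :=
        HasPoints.mkPoint_ax (P := P) hmd
      set ζ : P := HasPoints.mkPoint hmd
      have hvd : v ∉ d := by
        intro hvmem
        have : d = join huv := line_unique hzuv_v (left_mem_join hzz) hvmem
          hzuv_mem (right_mem_join huv)
        exact hzuw_u (pt_unique hjuv_uw (this ▸ right_mem_join hzz) hzuw_mem
          (left_mem_join huv) (left_mem_join huw))
      have hwd : w ∉ d := by
        intro hwmem
        have : d = join huw := line_unique hzuw_w (right_mem_join hzz) hwmem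
          hzuw_mem (right_mem_join huw)
        exact hzuv_u (pt_unique hjuv_uw.symm (this ▸ left_mem_join hzz) hzuv_mem
          (left_mem_join huw) (left_mem_join huv))
      have hζv : ζ ≠ v := fun h => hvd (h ▸ hζ1)
      have hζw : ζ ≠ w := fun h => hwd (h ▸ hζ1)
      have : ζ = zvw := third_point_unique hN hvw (left_mem_join hvw) (right_mem_join hvw)
        hζ2 hζv hζw hzvw_mem hzvw_v hzvw_w
      exact this ▸ hζ1
    -- every center is one of the three diagonal points, hence on d
    have hctr : ∀ c a, Φ c a → c ∈ d := by
      intro c a hφ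
      have hnall : ∃ t ∈ K, t ∉ a := by
        by_contra hxx
        push_neg at hxx
        exact hcol ⟨a, hxx u huK, hxx v hvK, hxx w hwK⟩
      obtain ⟨t, htK, hta⟩ := hnall
      obtain ⟨t', ht't, ht'K, ht'c, hcj, hct⟩ := pairlem c a hφ t htK hta
      -- identify c with a diagonal point
      have key : ∀ (x y zxy : P) (hxy : x ≠ y), zxy ∈ (join hxy : L) → zxy ≠ x → zxy ≠ y →
          ((t = x ∧ t' = y) ∨ (t = y ∧ t' = x)) → c = zxy := by
        rintro x y zxy hxy hz1 hz2 hz3 (⟨rfl, rfl⟩ | ⟨rfl, rfl⟩)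
        · have : (join ht't : L) = join hxy :=
            line_unique hxy (right_mem_join ht't) (left_mem_join ht't)
              (left_mem_join hxy) (right_mem_join hxy)
          exact third_point_unique hN hxy (left_mem_join hxy) (right_mem_join hxy)
            (this ▸ hcj) hct ht'c.symm hz1 hz2 hz3
        · have : (join ht't : L) = join hxy :=
            line_unique hxy (left_mem_join ht't) (right_mem_join ht't)
              (left_mem_join hxy) (right_mem_join hxy)
          exact third_point_unique hN hxy (left_mem_join hxy) (right_mem_join hxy)
            (this ▸ hcj) ht'c.symm hct hz1 hz2 hz3
      rcases hKmem t htK with ht | ht | ht <;> rcases hKmem t' ht'K with ht' | ht' | ht'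
      · exact absurd (ht'.trans ht.symm) ht't
      · have hc := key u v zuv huv hzuv_mem hzuv_u hzuv_v (Or.inl ⟨ht, ht'⟩)
        rw [hc]; exact left_mem_join hzz
      · have hc := key u w zuw huw hzuw_mem hzuw_u hzuw_w (Or.inl ⟨ht, ht'⟩)
        rw [hc]; exact right_mem_join hzz
      · have hc := key u v zuv huv hzuv_mem hzuv_u hzuv_v (Or.inr ⟨ht, ht'⟩)
        rw [hc]; exact left_mem_join hzz
      · exact absurd (ht'.trans ht.symm) ht't
      · have hc := key v w zvw hvw hzvw_mem hzvw_v hzvw_w (Or.inl ⟨ht, ht'⟩)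
        rw [hc]; exact hzvw_d
      · have hc := key u w zuw huw hzuw_mem hzuw_u hzuw_w (Or.inr ⟨ht, ht'⟩)
        rw [hc]; exact right_mem_join hzz
      · have hc := key v w zvw hvw hzvw_mem hzvw_v hzvw_w (Or.inr ⟨ht, ht'⟩)
        rw [hc]; exact hzvw_d
      · exact absurd (ht'.trans ht.symm) ht't
    obtain ⟨c, a, hφ, hcd⟩ := hCe d
    exact hcd (hctr c a hφ)

end PPlaneAux


open PPlaneAux Collineation

/-- If a collineation group `F` of a finite projective plane of prime order
contains a non-trivial elation, then `F` is transitive on points, or `F` fixes a point,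
or `F` fixes a line. -/
theorem transitive_or_fixes_point_or_line
    (P L : Type*) [Membership P L] [Finite P] [Finite L]
    [Configuration.ProjectivePlane P L]
    (hprime : (Configuration.ProjectivePlane.order P L).Prime)
    (F : Subgroup (Collineation P L))
    (helation : ∃ f ∈ F, f ≠ 1 ∧ ∃ (P₀ : P) (ℓ : L), f.IsElation P₀ ℓ) :
    (∀ p q : P, ∃ f ∈ F, f.pointMap p = q) ∨
    (∃ p : P, ∀ f ∈ F, f.pointMap p = p) ∨
    (∃ l : L, ∀ f ∈ F, f.lineMap l = l) := by
    classical
  by_contra hcon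
  push_neg at hcon
  obtain ⟨hA, hB, hC⟩ := hcon
  obtain ⟨x₀, y₀, hxy₀⟩ := hA
  -- the set of elation flags of F
  set Φ : P → L → Prop := fun c a => ∃ e ∈ F, e ≠ 1 ∧ e.IsElation c a with hΦdef
  have hΦflag : ∀ c a, Φ c a → c ∈ a := by
    rintro c a ⟨e, -, -, hca, -, -⟩
    exact hca
  obtain ⟨f₀, hf₀F, hf₀1, c₀, a₀, hel₀⟩ := helation
  have hΦ₀ : Φ c₀ a₀ := ⟨f₀, hf₀F, hf₀1, hel₀⟩
  -- flags are closed under conjugation by F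
  have hconj : ∀ c a, Φ c a → ∀ g ∈ F, Φ (g.pointMap c) (g.lineMap a) := by
    rintro c a ⟨e, heF, hne, hca, hpts, hlines⟩ g hgF
    refine ⟨g * e * g⁻¹, mul_mem (mul_mem hgF heF) (inv_mem hgF), ?_, ?_, ?_, ?_⟩
    · intro h1
      apply hne
      have : e = g⁻¹ * (g * e * g⁻¹) * g := by group
      rw [h1] at this
      rw [this]; group
    · exact (g.mem_map c a).2 hca
    · intro p hp
      have hq : g.pointMap.symm p ∈ a := by
        have := (g.mem_map (g.pointMap.symm p) a).1
        apply this
        rwa [Equiv.apply_symm_apply]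
      simp only [mul_pointMap, inv_pointMap]
      rw [hpts _ hq, Equiv.apply_symm_apply]
    · intro l hl
      have hq : c ∈ g.lineMap.symm l := by
        have := (g.mem_map c (g.lineMap.symm l)).1
        rw [Equiv.apply_symm_apply] at this
        have h2 := (g.mem_map c (g.lineMap.symm l)).2
        -- directly : g c ∈ l means c ∈ g⁻¹ l
        have h3 := (g.mem_map c (g.lineMap.symm l))
        rw [Equiv.apply_symm_apply] at h3
        exact h3.1 hl
      simp only [mul_lineMap, inv_lineMap]
      rw [hlines _ hq, Equiv.apply_symm_apply]
  -- axes are not concurrent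
  have hAxNC : ∀ z : P, ∃ c a, Φ c a ∧ z ∉ a := by
    intro z
    by_contra hxx
    push_neg at hxx
    by_cases hall : ∀ c a, Φ c a → a = a₀
    · obtain ⟨g, hgF, hgl⟩ := hC a₀
      exact hgl (hall _ _ (hconj c₀ a₀ hΦ₀ g hgF))
    · push_neg at hall
      obtain ⟨c₁, a₁, hφ₁, ha₁₀⟩ := hall
      obtain ⟨g, hgF, hgz⟩ := hB z
      apply hgz
      have hz₀ : z ∈ a₀ := hxx c₀ a₀ hΦ₀
      have hz₁ : z ∈ a₁ := hxx c₁ a₁ hφ₁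
      have hga₀ : z ∈ g.lineMap a₀ := hxx _ _ (hconj c₀ a₀ hΦ₀ g hgF)
      have hga₁ : z ∈ g.lineMap a₁ := hxx _ _ (hconj c₁ a₁ hφ₁ g hgF)
      have hgz₀ : g.pointMap z ∈ g.lineMap a₀ := (g.mem_map z a₀).2 hz₀
      have hgz₁ : g.pointMap z ∈ g.lineMap a₁ := (g.mem_map z a₁).2 hz₁
      have hganeq : g.lineMap a₁ ≠ g.lineMap a₀ := fun h => ha₁₀ (g.lineMap.injective h)
      exact pt_unique hganeq hgz₁ hgz₀ hga₁ hga₀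
  -- centers are not collinear
  have hCeNC : ∀ m : L, ∃ c a, Φ c a ∧ c ∉ m := by
    intro m
    by_contra hxx
    push_neg at hxx
    by_cases hall : ∀ c a, Φ c a → c = c₀
    · obtain ⟨g, hgF, hgz⟩ := hB c₀
      exact hgz (hall _ _ (hconj c₀ a₀ hΦ₀ g hgF))
    · push_neg at hall
      obtain ⟨c₁, a₁, hφ₁, hc₁₀⟩ := hall
      obtain ⟨g, hgF, hgl⟩ := hC m
      apply hgl
      have hc₀m : c₀ ∈ m := hxx c₀ a₀ hΦ₀
      have hc₁m : c₁ ∈ m := hxx c₁ a₁ hφ₁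
      have hgc₀ : g.pointMap c₀ ∈ m := hxx _ _ (hconj c₀ a₀ hΦ₀ g hgF)
      have hgc₁ : g.pointMap c₁ ∈ m := hxx _ _ (hconj c₁ a₁ hφ₁ g hgF)
      have hgm₀ : g.pointMap c₀ ∈ g.lineMap m := (g.mem_map c₀ m).2 hc₀m
      have hgm₁ : g.pointMap c₁ ∈ g.lineMap m := (g.mem_map c₁ m).2 hc₁m
      have hgcneq : g.pointMap c₁ ≠ g.pointMap c₀ := fun h => hc₁₀ (g.pointMap.injective h)
      exact line_unique hgcneq hgm₁ hgm₀ hgc₁ hgc₀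
  -- the orbit relation
  set Rel : P → P → Prop := fun x y => ∃ f ∈ F, f.pointMap x = y with hReldef
  have hrefl : ∀ x, Rel x x := fun x => ⟨1, one_mem F, rfl⟩
  have hsymm : ∀ x y, Rel x y → Rel y x := by
    rintro x y ⟨f, hfF, rfl⟩
    exact ⟨f⁻¹, inv_mem hfF, f.pointMap.symm_apply_apply x⟩
  have htrans : ∀ x y z, Rel x y → Rel y z → Rel x z := by
    rintro x y z ⟨f, hfF, rfl⟩ ⟨g, hgF, rfl⟩
    exact ⟨g * f, mul_mem hgF hfF, rfl⟩
  -- the elation move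
  have hmove : ∀ c (a : L), Φ c a → ∀ x, x ∉ a → ∀ (hxc : x ≠ c),
      ∀ y, y ∈ (join hxc : L) → y ≠ c → Rel x y := by
    rintro c a ⟨e, heF, hne, hel⟩ x hxa hxc y hyj hyc
    obtain ⟨k, hk⟩ := elation_orbit_line hprime hel hne hxa hxc hyj hyc
    exact ⟨e ^ k, pow_mem heF k, hk⟩
  -- classes
  set Cls : P → Set P := fun x => {y | Rel x y} with hClsdef
  have hKmove : ∀ x, ∀ c (a : L), Φ c a → ∀ t ∈ Cls x, t ∉ a → ∀ (htc : t ≠ c),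
      ∀ y, y ∈ (join htc : L) → y ≠ c → y ∈ Cls x := by
    intro x c a hφ t htK hta htc y hyj hyc
    exact htrans x t y htK (hmove c a hφ t hta htc y hyj hyc)
  have hbound : ∀ x : P, order P L ^ 2 - order P L + 1 ≤ (Cls x).ncard := by
    intro x
    exact class_lower_bound Φ hΦflag (Cls x) (hKmove x) x (hrefl x) (hAxNC x) hCeNC
  have hdisj : ∀ x y : P, ¬Rel x y → Disjoint (Cls x) (Cls y) := by
    intro x y hxy
    rw [Set.disjoint_left]
    intro z hzx hzy
    exact hxy (htrans x z y hzx (hsymm y z hzy))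
  have hnrel : ¬Rel x₀ y₀ := by
    rintro ⟨f, hfF, hf⟩
    exact hxy₀ f hfF hf
  set N := order P L with hNdef
  have hN2 : 2 ≤ N := hprime.two_le
  have hcardP : Nat.card P = N ^ 2 + N + 1 := card_points' P
  have hunion_le : ∀ A B : Set P, Disjoint A B → A.ncard + B.ncard ≤ N ^ 2 + N + 1 := by
    intro A B hAB
    rw [← Set.ncard_union_eq hAB A.toFinite B.toFinite, ← hcardP, ← Set.ncard_univ]
    exact Set.ncard_le_ncard (Set.subset_univ _) Set.finite_univ
  have hsum := hunion_le _ _ (hdisj x₀ y₀ hnrel)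
  have hb₀ := hbound x₀
  have hb₁ := hbound y₀
  -- N = 2
  have hNN : N = 2 := by
    by_contra hne2
    have h3 : 3 ≤ N := by omega
    have hm : 3 * N ≤ N ^ 2 := by
      calc 3 * N ≤ N * N := Nat.mul_le_mul_right N h3
      _ = N ^ 2 := (sq N).symm
    omega
  -- the order-2 endgame
  have hb3 : ∀ x : P, 3 ≤ (Cls x).ncard := by
    intro x
    have := hbound x
    rw [hNN] at this
    norm_num at this
    exact this
  -- every class is Cls x₀ or Cls y₀
  have hcover : ∀ z : P, Rel x₀ z ∨ Rel y₀ z := by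
    intro z
    by_contra hz
    push_neg at hz
    have hd1 := hdisj x₀ y₀ hnrel
    have hd2 := hdisj x₀ z hz.1
    have hd3 := hdisj y₀ z hz.2
    have hu1 : Disjoint (Cls x₀ ∪ Cls y₀) (Cls z) := Set.disjoint_union_left.2 ⟨hd2, hd3⟩
    have h1 : (Cls x₀ ∪ Cls y₀).ncard + (Cls z).ncard ≤ N ^ 2 + N + 1 := hunion_le _ _ hu1
    rw [Set.ncard_union_eq hd1 (Cls x₀).toFinite (Cls y₀).toFinite] at h1
    have := hb3 x₀; have := hb3 y₀; have := hb3 z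
    rw [hNN] at h1
    omega
  have hsum7 : (Cls x₀).ncard + (Cls y₀).ncard = N ^ 2 + N + 1 := by
    have : Cls x₀ ∪ Cls y₀ = Set.univ := by
      ext z
      simp only [Set.mem_union, Set.mem_univ, iff_true]
      exact hcover z
    rw [← Set.ncard_union_eq (hdisj x₀ y₀ hnrel) (Cls x₀).toFinite (Cls y₀).toFinite, this,
      Set.ncard_univ, hcardP]
  have h3ex : (Cls x₀).ncard = 3 ∨ (Cls y₀).ncard = 3 := by
    have := hb3 x₀; have := hb3 y₀
    rw [hNN] at hsum7
    omega
  have hfinal : ∀ x : P, (Cls x).ncard = 3 → False := by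
    intro x hx3
    exact no_three_class hNN Φ hΦflag hCeNC (Cls x) (hKmove x) hx3
  rcases h3ex with h | h
  · exact hfinal x₀ h
  · exact hfinal y₀ h
end

section
/- Let Π be a finite projective plane of prime order and let F be a collineation group of Π containing a non-trivial elation. Suppose that F fixes exactly one point Q and exactly one line m, and that Q is not incident with m. Then F acts transitively on the set of points incident with m, and F acts transitively on the set of points that are not incident with m and different from Q. -/
set_option linter.unusedSectionVars false


namespace Collineation
variable {P L : Type*} [Membership P L]

/-- the point action as a monoid hom into permutations -/
def toPointPerm : Collineation P L →* Equiv.Perm P where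
  toFun f := f.pointMap
  map_one' := rfl
  map_mul' _ _ := rfl

lemma pow_pointMap (f : Collineation P L) (k : ℕ) (x : P) :
    (f ^ k).pointMap x = (f.pointMap ^ k) x := by
  have : (f ^ k).pointMap = toPointPerm f ^ k := by
    rw [← map_pow]; rfl
  rw [this]; rfl

end Collineation


section PermLemmas

variable {α : Type*} [DecidableEq α]

lemma perm_dvd_card (σ : Equiv.Perm α) (n : ℕ) (hn : 0 < n) (hσn : σ ^ n = 1)
    (t : Finset α) (hinv : ∀ z ∈ t, σ z ∈ t)
    (hmin : ∀ z ∈ t, ∀ k : ℕ, 0 < k → k < n → (σ ^ k) z ≠ z) :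
    n ∣ t.card := by
  induction t using Finset.strongInduction with
  | _ t ih =>
    rcases t.eq_empty_or_nonempty with rfl | ⟨x, hx⟩
    · simp
    · have hiter : ∀ k : ℕ, (σ ^ k) x ∈ t := by
        intro k
        induction k with
        | zero => simpa using hx
        | succ k ihk =>
          rw [pow_succ', Equiv.Perm.mul_apply]
          exact hinv _ ihk
      have hperiod : ∀ i j : ℕ, i ≤ j → j < n → (σ ^ i) x = (σ ^ j) x → i = j := by
        intro i j hij hjn hE
        by_contra hne
        have h1 : (σ ^ (j - i)) ((σ ^ i) x) = (σ ^ i) x := by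
          rw [← Equiv.Perm.mul_apply, ← pow_add, Nat.sub_add_cancel hij, ← hE]
        exact hmin _ (hiter i) (j - i) (Nat.sub_pos_of_lt (lt_of_le_of_ne hij hne))
          (lt_of_le_of_lt (Nat.sub_le j i) hjn) h1
      set O : Finset α := (Finset.range n).image (fun k => (σ ^ k) x) with hO
      have hOsub : O ⊆ t := by
        intro z hz
        simp only [hO, Finset.mem_image, Finset.mem_range] at hz
        obtain ⟨k, -, rfl⟩ := hz
        exact hiter k
      have hOcard : O.card = n := by
        rw [hO, Finset.card_image_of_injOn, Finset.card_range]
        intro i hi j hj hE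
        simp only [Finset.mem_range, Finset.coe_range, Set.mem_Iio] at hi hj
        rcases le_total i j with h | h
        · exact hperiod i j h hj hE
        · exact (hperiod j i h hi hE.symm).symm
      have hxO : x ∈ O := by
        simp only [hO, Finset.mem_image, Finset.mem_range]
        exact ⟨0, hn, by simp⟩
      have hinv' : ∀ z ∈ t \ O, σ z ∈ t \ O := by
        intro z hz
        rw [Finset.mem_sdiff] at hz ⊢
        refine ⟨hinv z hz.1, fun hσz => hz.2 ?_⟩
        simp only [hO, Finset.mem_image, Finset.mem_range] at hσz ⊢
        obtain ⟨k, hk, hk2⟩ := hσz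
        rcases Nat.eq_zero_or_pos k with rfl | hk0
        · refine ⟨n - 1, by omega, ?_⟩
          have : (σ ^ n) x = x := by rw [hσn]; rfl
          have h2 : σ ((σ ^ (n-1)) x) = σ z := by
            rw [← Equiv.Perm.mul_apply, ← pow_succ', show n - 1 + 1 = n by omega, this, ← hk2]
            simp
          exact σ.injective h2
        · refine ⟨k - 1, by omega, ?_⟩
          have h2 : σ ((σ ^ (k-1)) x) = σ z := by
            rw [← Equiv.Perm.mul_apply, ← pow_succ', show k - 1 + 1 = k by omega, hk2]
          exact σ.injective h2
      have hmin' : ∀ z ∈ t \ O, ∀ k : ℕ, 0 < k → k < n → (σ ^ k) z ≠ z :=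
        fun z hz => hmin z (Finset.mem_sdiff.mp hz).1
      have hss : t \ O ⊂ t :=
        Finset.sdiff_ssubset hOsub ⟨x, hxO⟩
      have hdvd := ih (t \ O) hss hinv' hmin'
      have hcards : (t \ O).card = t.card - n := by
        rw [Finset.card_sdiff_of_subset hOsub, hOcard]
      have hle : n ≤ t.card := hOcard ▸ Finset.card_le_card hOsub
      have : t.card = (t \ O).card + n := by omega
      rw [this]
      exact Nat.dvd_add hdvd dvd_rfl
end PermLemmas

section PermTrans
variable {α : Type*} [DecidableEq α] [Fintype α]

lemma perm_cycle_trans (σ : Equiv.Perm α) (t : Finset α)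
    (hinv : ∀ z ∈ t, σ z ∈ t)
    (hfree : ∀ (k : ℕ), ∀ z ∈ t, (σ ^ k) z = z → σ ^ k = 1)
    (hσ1 : σ ≠ 1) (hp : t.card.Prime) :
    ∀ x ∈ t, ∀ y ∈ t, ∃ k : ℕ, (σ ^ k) x = y := by
  intro x hx y hy
  set n := orderOf σ with hn
  have hn0 : 0 < n := orderOf_pos σ
  have hσn : σ ^ n = 1 := pow_orderOf_eq_one σ
  have hmin : ∀ z ∈ t, ∀ k : ℕ, 0 < k → k < n → (σ ^ k) z ≠ z := by
    intro z hz k hk0 hkn hE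
    have h1 := hfree k z hz hE
    have := orderOf_dvd_of_pow_eq_one h1
    have := Nat.le_of_dvd hk0 this
    omega
  have hdvd : n ∣ t.card := perm_dvd_card σ n hn0 hσn t hinv hmin
  have hnp : n = t.card := by
    rcases (Nat.Prime.eq_one_or_self_of_dvd hp n hdvd) with h | h
    · exact absurd (orderOf_eq_one_iff.mp h) hσ1
    · exact h
  have hiter : ∀ k : ℕ, (σ ^ k) x ∈ t := by
    intro k
    induction k with
    | zero => simpa using hx
    | succ k ihk => rw [pow_succ', Equiv.Perm.mul_apply]; exact hinv _ ihk
  have hperiod : ∀ i j : ℕ, i ≤ j → j < n → (σ ^ i) x = (σ ^ j) x → i = j := by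
    intro i j hij hjn hE
    by_contra hne
    have h1 : (σ ^ (j - i)) ((σ ^ i) x) = (σ ^ i) x := by
      rw [← Equiv.Perm.mul_apply, ← pow_add, Nat.sub_add_cancel hij, ← hE]
    exact hmin _ (hiter i) (j - i) (Nat.sub_pos_of_lt (lt_of_le_of_ne hij hne))
      (lt_of_le_of_lt (Nat.sub_le j i) hjn) h1
  set O : Finset α := (Finset.range n).image (fun k => (σ ^ k) x) with hO
  have hOsub : O ⊆ t := by
    intro z hz
    simp only [hO, Finset.mem_image, Finset.mem_range] at hz
    obtain ⟨k, -, rfl⟩ := hz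
    exact hiter k
  have hOcard : O.card = n := by
    rw [hO, Finset.card_image_of_injOn, Finset.card_range]
    intro i hi j hj hE
    simp only [Finset.coe_range, Set.mem_Iio] at hi hj
    rcases le_total i j with h | h
    · exact hperiod i j h hj hE
    · exact (hperiod j i h hi hE.symm).symm
  have hOt : O = t := Finset.eq_of_subset_of_card_le hOsub (by omega)
  have : y ∈ O := hOt ▸ hy
  simp only [hO, Finset.mem_image, Finset.mem_range] at this
  obtain ⟨k, -, hk⟩ := this
  exact ⟨k, hk⟩

end PermTrans


open Configuration Configuration.ProjectivePlane

section Geom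

variable {P L : Type*} [Membership P L] [Finite P] [Finite L]
  [Configuration.ProjectivePlane P L]

set_option linter.unusedSectionVars false
lemma line_unique {p q : P} {l l' : L} (hpq : p ≠ q)
    (h1 : p ∈ l) (h2 : q ∈ l) (h3 : p ∈ l') (h4 : q ∈ l') : l = l' :=
  (Nondegenerate.eq_or_eq h1 h2 h3 h4).resolve_left hpq

lemma point_unique {p q : P} {l l' : L} (hll : l ≠ l')
    (h1 : p ∈ l) (h2 : q ∈ l) (h3 : p ∈ l') (h4 : q ∈ l') : p = q :=
  (Nondegenerate.eq_or_eq h1 h2 h3 h4).resolve_right hll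

lemma exists_mem_ne_ne (l : L) (u v : P) : ∃ w, w ∈ l ∧ w ≠ u ∧ w ≠ v := by
  classical
  cases nonempty_fintype P
  cases nonempty_fintype L
  have hcard : (Finset.univ.filter (· ∈ l)).card = order P L + 1 := by
    rw [← pointCount_eq P l, pointCount, Nat.card_eq_fintype_card, Fintype.card_subtype]
  by_contra h
  push_neg at h
  have hsub : Finset.univ.filter (· ∈ l) ⊆ {u, v} := by
    intro w hw
    simp only [Finset.mem_filter, Finset.mem_univ, true_and] at hw
    simp only [Finset.mem_insert, Finset.mem_singleton]
    rcases eq_or_ne w u with h1 | h1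
    · exact Or.inl h1
    · exact Or.inr (h w hw h1)
  have := Finset.card_le_card hsub
  have h2 : ({u, v} : Finset P).card ≤ 2 := Finset.card_le_two
  have := one_lt_order P L
  omega

lemma exists_two_points (l : L) : ∃ u v : P, u ∈ l ∧ v ∈ l ∧ u ≠ v := by
  obtain ⟨p, -⟩ := Nondegenerate.exists_point (P := P) l
  obtain ⟨u, hu, -, -⟩ := exists_mem_ne_ne l p p
  obtain ⟨v, hv, hvu, -⟩ := exists_mem_ne_ne l u u
  exact ⟨u, v, hu, hv, hvu.symm⟩

lemma exists_point_off_two_lines (l₁ l₂ : L) : ∃ w : P, w ∉ l₁ ∧ w ∉ l₂ := by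
  rcases eq_or_ne l₁ l₂ with rfl | hne
  · obtain ⟨p, hp⟩ := Nondegenerate.exists_point (P := P) l₁
    exact ⟨p, hp, hp⟩
  · have haux : ∀ l l' : L, l ≠ l' → ∃ y : P, y ∈ l ∧ y ∉ l' := by
      intro l l' hll
      by_contra h
      push_neg at h
      obtain ⟨u, v, hu, hv, huv⟩ := exists_two_points (P := P) l
      exact hll (line_unique huv hu hv (h u hu) (h v hv))
    obtain ⟨y, hy1, hy2⟩ := haux l₁ l₂ hne
    obtain ⟨z, hz2, hz1⟩ := haux l₂ l₁ hne.symm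
    have hyz : y ≠ z := fun h => hy2 (h ▸ hz2)
    set l₃ := HasLines.mkLine (L := L) hyz with hl₃
    obtain ⟨hyl₃, hzl₃⟩ := HasLines.mkLine_ax (L := L) hyz
    obtain ⟨w, hw, hwy, hwz⟩ := exists_mem_ne_ne l₃ y z
    refine ⟨w, fun hw1 => ?_, fun hw2 => ?_⟩
    · exact hz1 (line_unique hwy hw1 hy1 hw hyl₃ ▸ hzl₃)
    · exact hy2 (line_unique hwz hw2 hz2 hw hzl₃ ▸ hyl₃)

end Geom

section Elation

open Collineation

variable {P L : Type*} [Membership P L] [Finite P] [Finite L]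
  [Configuration.ProjectivePlane P L]

namespace Collineation

lemma IsElation.one {c : P} {a : L} (hca : c ∈ a) : (1 : Collineation P L).IsElation c a :=
  ⟨hca, fun _ _ => rfl, fun _ _ => rfl⟩

lemma IsElation.mul {f g : Collineation P L} {c : P} {a : L}
    (hf : f.IsElation c a) (hg : g.IsElation c a) : (f * g).IsElation c a := by
  refine ⟨hf.1, fun p hp => ?_, fun l hl => ?_⟩
  · rw [mul_pointMap, hg.2.1 p hp, hf.2.1 p hp]
  · rw [mul_lineMap, hg.2.2 l hl, hf.2.2 l hl]

lemma IsElation.pow {f : Collineation P L} {c : P} {a : L}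
    (hf : f.IsElation c a) (k : ℕ) : (f ^ k).IsElation c a := by
  induction k with
  | zero => exact IsElation.one hf.1
  | succ k ih => rw [pow_succ]; exact ih.mul hf

/-- A nontrivial elation fixes no point off its axis. -/
lemma IsElation.eq_one_of_fixes {f : Collineation P L} {c : P} {a : L}
    (hf : f.IsElation c a) {x : P} (hx : x ∉ a) (hfx : f.pointMap x = x) : f = 1 := by
  have fixline : ∀ (u v : P) (l : L), u ≠ v → u ∈ l → v ∈ l →
      f.pointMap u = u → f.pointMap v = v → f.lineMap l = l := by
    intro u v l huv hul hvl hu hv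
    have h1 : u ∈ f.lineMap l := hu ▸ (f.mem_map u l).mpr hul
    have h2 : v ∈ f.lineMap l := hv ▸ (f.mem_map v l).mpr hvl
    exact line_unique huv h1 h2 hul hvl
  have fixpoint : ∀ (u : P) (l l' : L), l ≠ l' → u ∈ l → u ∈ l' →
      f.lineMap l = l → f.lineMap l' = l' → f.pointMap u = u := by
    intro u l l' hll hul hul' hl hl'
    have h1 : f.pointMap u ∈ l := hl ▸ (f.mem_map u l).mpr hul
    have h2 : f.pointMap u ∈ l' := hl' ▸ (f.mem_map u l').mpr hul'
    exact point_unique hll h1 hul h2 hul'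
  have fixpencil : ∀ w : P, w ∉ a → f.pointMap w = w → ∀ l : L, w ∈ l → f.lineMap l = l := by
    intro w hw hfw l hwl
    by_cases hcl : c ∈ l
    · exact hf.2.2 l hcl
    · have hla : l ≠ a := fun h => hw (h ▸ hwl)
      obtain ⟨hy1, hy2⟩ := Configuration.HasPoints.mkPoint_ax (P := P) hla
      set y := Configuration.HasPoints.mkPoint (P := P) hla
      have hyw : w ≠ y := fun h => hw (h ▸ hy2)
      exact fixline w y l hyw hwl hy1 hfw (hf.2.1 y hy2)
  have fixoff : ∀ w : P, w ∉ a → f.pointMap w = w → ∀ lwc : L, w ∈ lwc → c ∈ lwc →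
      ∀ z : P, z ∉ lwc → f.pointMap z = z := by
    intro w hw hfw lwc hw1 hc1 z hz
    have hzw : z ≠ w := fun h => hz (h ▸ hw1)
    have hzc : z ≠ c := fun h => hz (h ▸ hc1)
    obtain ⟨hz1, hw2⟩ := Configuration.HasLines.mkLine_ax (L := L) hzw
    obtain ⟨hz2, hc2⟩ := Configuration.HasLines.mkLine_ax (L := L) hzc
    have l1fixed := fixpencil w hw hfw _ hw2
    have l2fixed := hf.2.2 _ hc2
    have hne : Configuration.HasLines.mkLine (L := L) hzw ≠ Configuration.HasLines.mkLine (L := L) hzc := by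
      intro h
      have hwc : w ≠ c := fun hh => hw (hh ▸ hf.1)
      have : Configuration.HasLines.mkLine (L := L) hzw = lwc :=
        line_unique hwc hw2 (h ▸ hc2) hw1 hc1
      exact hz (this ▸ hz1)
    exact fixpoint z _ _ hne hz1 hz2 l1fixed l2fixed
  have hxc : x ≠ c := fun h => hx (h ▸ hf.1)
  obtain ⟨hx1, hc1⟩ := Configuration.HasLines.mkLine_ax (L := L) hxc
  set lxc := Configuration.HasLines.mkLine (L := L) hxc with hlxc
  obtain ⟨w, hw1, hw2⟩ := exists_point_off_two_lines (P := P) a lxc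
  have hfw : f.pointMap w = w := fixoff x hx hfx lxc hx1 hc1 w hw2
  have hwc : w ≠ c := fun h => hw1 (h ▸ hf.1)
  obtain ⟨hwl1, hcl1⟩ := Configuration.HasLines.mkLine_ax (L := L) hwc
  set lwc := Configuration.HasLines.mkLine (L := L) hwc with hlwc
  have allpts : ∀ z : P, f.pointMap z = z := by
    intro z
    by_cases hz1 : z ∈ lxc
    · by_cases hz2 : z ∈ lwc
      · have hlne : lxc ≠ lwc := fun h => hw2 (h ▸ hwl1)
        have : z = c := point_unique hlne hz1 hc1 hz2 hcl1
        rw [this]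
        exact hf.2.1 c hf.1
      · exact fixoff w hw1 hfw lwc hwl1 hcl1 z hz2
    · exact fixoff x hx hfx lxc hx1 hc1 z hz1
  have alllines : ∀ l : L, f.lineMap l = l := by
    intro l
    obtain ⟨u, v, hu, hv, huv⟩ := exists_two_points (P := P) l
    exact fixline u v l huv hu hv (allpts u) (allpts v)
  exact Collineation.ext (Equiv.ext allpts) (Equiv.ext alllines)

/-- A nontrivial elation fixes no line off its center. -/
lemma IsElation.eq_one_of_fixes_line {f : Collineation P L} {c : P} {a : L}
    (hf : f.IsElation c a) {l : L} (hl : c ∉ l) (hfl : f.lineMap l = l) : f = 1 := by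
  have hpts : ∀ z : P, z ∈ l → f.pointMap z = z := by
    intro z hz
    have hzc : z ≠ c := fun h => hl (h ▸ hz)
    obtain ⟨hz2, hc2⟩ := Configuration.HasLines.mkLine_ax (L := L) hzc
    have hlzc : f.lineMap (Configuration.HasLines.mkLine (L := L) hzc) =
        Configuration.HasLines.mkLine (L := L) hzc := hf.2.2 _ hc2
    have h1 : f.pointMap z ∈ l := hfl ▸ (f.mem_map z l).mpr hz
    have h2 : f.pointMap z ∈ Configuration.HasLines.mkLine (L := L) hzc :=
      hlzc ▸ (f.mem_map z _).mpr hz2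
    have hne : l ≠ Configuration.HasLines.mkLine (L := L) hzc := fun h => hl (h ▸ hc2)
    exact point_unique hne h1 hz h2 hz2
  obtain ⟨u, v, hu, hv, huv⟩ := exists_two_points (P := P) l
  have : u ∉ a ∨ v ∉ a := by
    by_contra h
    push_neg at h
    have : l = a := line_unique huv hu hv h.1 h.2
    exact hl (this ▸ hf.1)
  rcases this with h | h
  · exact hf.eq_one_of_fixes h (hpts u hu)
  · exact hf.eq_one_of_fixes h (hpts v hv)

/-- Conjugate of an elation is an elation. -/
lemma IsElation.conj {f : Collineation P L} {c : P} {a : L}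
    (hf : f.IsElation c a) (g : Collineation P L) :
    (g * f * g⁻¹).IsElation (g.pointMap c) (g.lineMap a) := by
  refine ⟨(g.mem_map c a).mpr hf.1, fun p hp => ?_, fun l hl => ?_⟩
  · have hmem : g.pointMap.symm p ∈ a := by
      rw [← g.mem_map, g.pointMap.apply_symm_apply]
      exact hp
    show g.pointMap (f.pointMap (g.pointMap.symm p)) = p
    rw [hf.2.1 _ hmem, g.pointMap.apply_symm_apply]
  · have hmem : c ∈ g.lineMap.symm l := by
      have : g.pointMap c ∈ g.lineMap (g.lineMap.symm l) := by
        rw [g.lineMap.apply_symm_apply]; exact hl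
      exact (g.mem_map c _).mp this
    show g.lineMap (f.lineMap (g.lineMap.symm l)) = l
    rw [hf.2.2 _ hmem, g.lineMap.apply_symm_apply]

end Collineation

end Elation

section Engine

open Configuration Configuration.ProjectivePlane Collineation

variable {P L : Type*} [Membership P L] [Finite P] [Finite L]
  [Configuration.ProjectivePlane P L]

lemma elation_transitive (hprime : (order P L).Prime)
    {f : Collineation P L} {c : P} {a : L} (hf : f.IsElation c a) (hf1 : f ≠ 1)
    {l : L} (hcl : c ∈ l) (hla : l ≠ a)
    {x y : P} (hx : x ∈ l) (hxc : x ≠ c) (hy : y ∈ l) (hyc : y ≠ c) :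
    ∃ k : ℕ, (f ^ k).pointMap x = y := by
  classical
  cases nonempty_fintype P
  cases nonempty_fintype L
  set σ : Equiv.Perm P := f.pointMap with hσ
  set t : Finset P := (Finset.univ.filter (· ∈ l)).erase c with ht
  have hmem : ∀ z : P, z ∈ t ↔ z ∈ l ∧ z ≠ c := by
    intro z
    simp only [ht, Finset.mem_erase, Finset.mem_filter, Finset.mem_univ, true_and]
    tauto
  have hcardt : t.card = order P L := by
    rw [ht, Finset.card_erase_of_mem (by simp [hcl]),
      show (Finset.univ.filter (· ∈ l)).card = order P L + 1 by
        rw [← pointCount_eq P l, pointCount, Nat.card_eq_fintype_card, Fintype.card_subtype]]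
    omega
  have hfixl : f.lineMap l = l := hf.2.2 l hcl
  have hfixc : f.pointMap c = c := hf.2.1 c hf.1
  have hoff : ∀ z ∈ t, z ∉ a := by
    intro z hz hza
    obtain ⟨hzl, hzc⟩ := (hmem z).mp hz
    exact hla (line_unique hzc hzl hcl hza hf.1)
  have hinv : ∀ z ∈ t, σ z ∈ t := by
    intro z hz
    obtain ⟨hzl, hzc⟩ := (hmem z).mp hz
    rw [hmem]
    constructor
    · exact hfixl ▸ (f.mem_map z l).mpr hzl
    · intro h
      exact hzc (f.pointMap.injective (h.trans hfixc.symm))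
  have hpow : ∀ (k : ℕ) (z : P), (σ ^ k) z = (f ^ k).pointMap z := by
    intro k z
    rw [pow_pointMap]
  have hfree : ∀ (k : ℕ), ∀ z ∈ t, (σ ^ k) z = z → σ ^ k = 1 := by
    intro k z hz hkz
    have hoffz := hoff z hz
    rw [hpow] at hkz
    have : f ^ k = 1 := (hf.pow k).eq_one_of_fixes hoffz hkz
    ext w
    rw [hpow, this]
    rfl
  have hσ1 : σ ≠ 1 := by
    intro h
    apply hf1
    refine hf.eq_one_of_fixes (hoff x ((hmem x).mpr ⟨hx, hxc⟩)) ?_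
    show σ x = x
    rw [h]; rfl
  obtain ⟨k, hk⟩ := perm_cycle_trans σ t hinv hfree hσ1 (hcardt ▸ hprime)
    x ((hmem x).mpr ⟨hx, hxc⟩) y ((hmem y).mpr ⟨hy, hyc⟩)
  exact ⟨k, by rw [← hpow]; exact hk⟩

end Engine

/-- Let `F` be a collineation group of a finite projective plane of prime
order containing a non-trivial elation. If `F` fixes exactly one point `Q` and exactly one
line `m`, with `Q` not incident with `m`, then `F` is transitive on the points incident
with `m`, and transitive on the points not incident with `m` and different from `Q`. -/
theorem transitive_on_line_and_off_line
    (P L : Type*) [Membership P L] [Finite P] [Finite L]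
    [Configuration.ProjectivePlane P L]
    (hprime : (Configuration.ProjectivePlane.order P L).Prime)
    (F : Subgroup (Collineation P L))
    (helation : ∃ f ∈ F, f ≠ 1 ∧ ∃ (P₀ : P) (ℓ : L), f.IsElation P₀ ℓ)
    (Q : P) (m : L)
    (hQ : ∀ f ∈ F, f.pointMap Q = Q)
    (hQunique : ∀ p : P, (∀ f ∈ F, f.pointMap p = p) → p = Q)
    (hm : ∀ f ∈ F, f.lineMap m = m)
    (hmunique : ∀ l : L, (∀ f ∈ F, f.lineMap l = l) → l = m)
    (hQm : Q ∉ m) :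
    (∀ p q : P, p ∈ m → q ∈ m → ∃ f ∈ F, f.pointMap p = q) ∧
    (∀ p q : P, p ∉ m → p ≠ Q → q ∉ m → q ≠ Q → ∃ f ∈ F, f.pointMap p = q) := by
  classical
  obtain ⟨f, hfF, hf1, c0, a0, hel⟩ := helation
  have hQa0 : Q ∈ a0 := by
    by_contra h
    exact hf1 (hel.eq_one_of_fixes h (hQ f hfF))
  have hc0m : c0 ∈ m := by
    by_contra h
    exact hf1 (hel.eq_one_of_fixes_line h (hm f hfF))
  have ha0m : m ≠ a0 := fun h => hQm (h ▸ hQa0)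
  have step : ∀ p q : P, p ∈ m → p ≠ c0 → q ∈ m → q ≠ c0 → ∃ g ∈ F, g.pointMap p = q := by
    intro p q hp hpc hq hqc
    obtain ⟨k, hk⟩ := elation_transitive hprime hel hf1 hc0m ha0m hp hpc hq hqc
    exact ⟨f ^ k, pow_mem hfF k, hk⟩
  obtain ⟨g0, hg0F, hg0c⟩ : ∃ g0 ∈ F, g0.pointMap c0 ≠ c0 := by
    by_contra h
    push_neg at h
    exact hQm ((hQunique c0 h) ▸ hc0m)
  have hc1m : g0.pointMap c0 ∈ m := by
    have := (g0.mem_map c0 m).mpr hc0m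
    rwa [hm g0 hg0F] at this
  have trans_m : ∀ p q : P, p ∈ m → q ∈ m → ∃ g ∈ F, g.pointMap p = q := by
    intro p q hp hq
    by_cases hpc : p = c0
    · by_cases hqc : q = c0
      · exact ⟨1, one_mem F, by rw [hpc, hqc]; rfl⟩
      · obtain ⟨g, hgF, hgk⟩ := step (g0.pointMap c0) q hc1m hg0c hq hqc
        exact ⟨g * g0, mul_mem hgF hg0F, by rw [Collineation.mul_pointMap, hpc, hgk]⟩
    · by_cases hqc : q = c0
      · obtain ⟨g, hgF, hgk⟩ := step p (g0.pointMap c0) hp hpc hc1m hg0c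
        refine ⟨g0⁻¹ * g, mul_mem (inv_mem hg0F) hgF, ?_⟩
        rw [Collineation.mul_pointMap, hgk, Collineation.inv_pointMap,
          Equiv.symm_apply_apply, hqc]
      · exact step p q hp hpc hq hqc
  refine ⟨trans_m, ?_⟩
  have key : ∀ c : P, c ∈ m → ∃ (g : Collineation P L) (a : L),
      g ∈ F ∧ g ≠ 1 ∧ g.IsElation c a ∧ Q ∈ a := by
    intro c hc
    obtain ⟨g, hgF, hgc⟩ := trans_m c0 c hc0m hc
    refine ⟨g * f * g⁻¹, g.lineMap a0, mul_mem (mul_mem hgF hfF) (inv_mem hgF),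
      ?_, hgc ▸ hel.conj g, ?_⟩
    · intro h
      apply hf1
      have h2 : f = g⁻¹ * (g * f * g⁻¹) * g := by group
      rw [h2, h]
      group
    · have := (g.mem_map Q a0).mpr hQa0
      rwa [hQ g hgF] at this
  have reach : ∀ c x y : P, c ∈ m → x ∉ m → x ≠ Q →
      (∀ l : L, Q ∈ l → x ∈ l → c ∉ l) →
      ∀ l : L, c ∈ l → x ∈ l → y ∈ l → y ≠ c → ∃ g ∈ F, g.pointMap x = y := by
    intro c x y hc hxm hxQ hncol l hcl hxl hyl hyc
    obtain ⟨g, a, hgF, hg1, hgel, hQa⟩ := key c hc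
    have hxa : x ∉ a := fun hxa => hncol a hQa hxa hgel.1
    have hla : l ≠ a := fun h => hxa (h ▸ hxl)
    have hxc : x ≠ c := fun h => hxm (h ▸ hc)
    obtain ⟨k, hk⟩ := elation_transitive hprime hgel hg1 hcl hla hxl hxc hyl hyc
    exact ⟨g ^ k, pow_mem hgF k, hk⟩
  intro x y hxm hxQ hym hyQ
  by_cases hxy : x = y
  · exact ⟨1, one_mem F, by rw [hxy]; rfl⟩
  have hQx : Q ≠ x := Ne.symm hxQ
  have hQy : Q ≠ y := Ne.symm hyQ
  obtain ⟨hQ1, hx1⟩ := Configuration.HasLines.mkLine_ax (L := L) hQx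
  set lQx := Configuration.HasLines.mkLine (L := L) hQx with hlQx
  have hlQxm : lQx ≠ m := fun h => hQm (h ▸ hQ1)
  obtain ⟨hcQx1, hcQx2⟩ := Configuration.HasPoints.mkPoint_ax (P := P) hlQxm
  set cQx := Configuration.HasPoints.mkPoint (P := P) hlQxm with hcQx
  have hncolx : ∀ c : P, c ∈ m → c ≠ cQx → ∀ l : L, Q ∈ l → x ∈ l → c ∉ l := by
    intro c hc hcne l hQl hxl hcl
    have h2 : l = lQx := line_unique hQx hQl hxl hQ1 hx1
    exact hcne (point_unique hlQxm (h2 ▸ hcl) hcQx1 hc hcQx2)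
  obtain ⟨hx2, hy2⟩ := Configuration.HasLines.mkLine_ax (L := L) (hxy : x ≠ y)
  set lxy := Configuration.HasLines.mkLine (L := L) (hxy : x ≠ y) with hlxy
  by_cases hQl : Q ∈ lxy
  · -- Q, x, y collinear
    have hlxyQx : lxy = lQx := line_unique hQx hQl hx2 hQ1 hx1
    obtain ⟨c, hcm, hcne, -⟩ := exists_mem_ne_ne m cQx cQx
    obtain ⟨c', hc'm, hc'ne, hc'c⟩ := exists_mem_ne_ne m cQx c
    have hcx : c ≠ x := fun h => hxm (h ▸ hcm)
    have hc'y : c' ≠ y := fun h => hym (h ▸ hc'm)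
    obtain ⟨hc3, hx3⟩ := Configuration.HasLines.mkLine_ax (L := L) hcx
    set lcx := Configuration.HasLines.mkLine (L := L) hcx with hlcx
    obtain ⟨hc'4, hy4⟩ := Configuration.HasLines.mkLine_ax (L := L) hc'y
    set lc'y := Configuration.HasLines.mkLine (L := L) hc'y with hlc'y
    have hlne : lcx ≠ lc'y := by
      intro h
      have h2 : lcx = m := line_unique hc'c (h ▸ hc'4) hc3 hc'm hcm
      exact hxm (h2 ▸ hx3)
    obtain ⟨hz1, hz2⟩ := Configuration.HasPoints.mkPoint_ax (P := P) hlne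
    set z := Configuration.HasPoints.mkPoint (P := P) hlne with hz
    have hlcxm : lcx ≠ m := fun h => hxm (h ▸ hx3)
    have hlc'ym : lc'y ≠ m := fun h => hym (h ▸ hy4)
    have hzm : z ∉ m := by
      intro hzm'
      have e1 : z = c := point_unique hlcxm hz1 hc3 hzm' hcm
      have e2 : z = c' := point_unique hlc'ym hz2 hc'4 hzm' hc'm
      exact hc'c (by rw [← e2, e1])
    have hzQ : z ≠ Q := by
      intro h
      have h2 : lcx = lQx := line_unique hQx (h ▸ hz1) hx3 hQ1 hx1
      exact hcne (point_unique hlQxm (h2 ▸ hc3) hcQx1 hcm hcQx2)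
    have hzc : z ≠ c := fun h => hzm (h ▸ hcm)
    have hzc' : z ≠ c' := fun h => hzm (h ▸ hc'm)
    obtain ⟨g1, hg1F, hg1k⟩ :=
      reach c x z hcm hxm hxQ (hncolx c hcm hcne) lcx hc3 hx3 hz1 hzc
    have hncolz : ∀ l : L, Q ∈ l → z ∈ l → c' ∉ l := by
      intro l hQl2 hzl hc'l
      by_cases hll : l = lc'y
      · have h1 : lc'y = lQx :=
          line_unique hQy (hll ▸ hQl2) hy4 hQ1 (hlxyQx ▸ hy2)
        exact hc'ne (point_unique hlQxm (h1 ▸ hc'4) hcQx1 hc'm hcQx2)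
      · exact hzc' (point_unique hll hzl hc'l hz2 hc'4)
    obtain ⟨g2, hg2F, hg2k⟩ :=
      reach c' z y hc'm hzm hzQ hncolz lc'y hc'4 hz2 hy4 (Ne.symm hc'y)
    exact ⟨g2 * g1, mul_mem hg2F hg1F,
      by rw [Collineation.mul_pointMap, hg1k, hg2k]⟩
  · -- Q not on line xy
    have hlxym : lxy ≠ m := fun h => hxm (h ▸ hx2)
    obtain ⟨hc1, hc2⟩ := Configuration.HasPoints.mkPoint_ax (P := P) hlxym
    set c := Configuration.HasPoints.mkPoint (P := P) hlxym with hc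
    have hcne : c ≠ cQx := by
      intro h
      have hll : lQx ≠ lxy := fun hh => hQl (hh ▸ hQ1)
      have h2 : c = x := point_unique hll (h ▸ hcQx1) hx1 hc1 hx2
      exact hxm (h2 ▸ hc2)
    have hyc : y ≠ c := fun h => hym (h ▸ hc2)
    exact reach c x y hc2 hxm hxQ (hncolx c hc2 hcne) lxy hc1 hx2 hy2 hyc
end

section
/- Let q ≥ 2 be a natural number, set n = q² + q + 1, and let D be a difference set with parameter q, i.e. a subset of ℤ/nℤ of cardinality q+1 such that for every nonzero x ∈ ℤ/nℤ there exists exactly one ordered pair (d, d') ∈ D × D with x = d − d'. Define an incidence structure Π_D whose point set and line set are both ℤ/nℤ, a point y being incident with a line x if and only if y − x ∈ D. Then Π_D is a projective plane of order q: any two distinct points lie on a unique common line, any two distinct lines meet in a unique point, there exist four points no three of which are collinear, and every line is incident with exactly q+1 points. -/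
/-- Let `q ≥ 2`, `n = q² + q + 1`, and let `D ⊆ ℤ/nℤ` be a difference set
with parameter `q`: `|D| = q + 1` and every nonzero `x ∈ ℤ/nℤ` is uniquely a difference of
an ordered pair of elements of `D`.  With points and lines both `ℤ/nℤ` and a point `p`
incident with a line `l` iff `p - l ∈ D`, one obtains a projective plane of order `q`:
two distinct points lie on a unique common line, two distinct lines meet in a unique point,
there are four points no three of which are collinear, and every line carries exactly
`q + 1` points. -/
theorem differenceSet_gives_projectivePlane
    (q : ℕ) (hq : 2 ≤ q) (D : Finset (ZMod (q ^ 2 + q + 1)))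
    (hcard : D.card = q + 1)
    (hD : ∀ x : ZMod (q ^ 2 + q + 1), x ≠ 0 →
      ∃! dd : ZMod (q ^ 2 + q + 1) × ZMod (q ^ 2 + q + 1),
        (dd.1 ∈ D ∧ dd.2 ∈ D) ∧ x = dd.1 - dd.2) :
    (∀ p₁ p₂ : ZMod (q ^ 2 + q + 1), p₁ ≠ p₂ →
      ∃! l : ZMod (q ^ 2 + q + 1), p₁ - l ∈ D ∧ p₂ - l ∈ D) ∧
    (∀ l₁ l₂ : ZMod (q ^ 2 + q + 1), l₁ ≠ l₂ →
      ∃! p : ZMod (q ^ 2 + q + 1), p - l₁ ∈ D ∧ p - l₂ ∈ D) ∧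
    (∃ p₁ p₂ p₃ p₄ : ZMod (q ^ 2 + q + 1),
      p₁ ≠ p₂ ∧ p₁ ≠ p₃ ∧ p₁ ≠ p₄ ∧ p₂ ≠ p₃ ∧ p₂ ≠ p₄ ∧ p₃ ≠ p₄ ∧
      ∀ l : ZMod (q ^ 2 + q + 1),
        ¬(p₁ - l ∈ D ∧ p₂ - l ∈ D ∧ p₃ - l ∈ D) ∧
        ¬(p₁ - l ∈ D ∧ p₂ - l ∈ D ∧ p₄ - l ∈ D) ∧
        ¬(p₁ - l ∈ D ∧ p₃ - l ∈ D ∧ p₄ - l ∈ D) ∧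
        ¬(p₂ - l ∈ D ∧ p₃ - l ∈ D ∧ p₄ - l ∈ D)) ∧
    (∀ l : ZMod (q ^ 2 + q + 1),
      Nat.card {p : ZMod (q ^ 2 + q + 1) // p - l ∈ D} = q + 1) := by

  have hn1 : 1 < q ^ 2 + q + 1 := by nlinarith
  haveI : Fact (1 < q ^ 2 + q + 1) := ⟨hn1⟩
  -- Part 1: two distinct points lie on a unique line
  have part1 : ∀ p₁ p₂ : ZMod (q ^ 2 + q + 1), p₁ ≠ p₂ →
      ∃! l : ZMod (q ^ 2 + q + 1), p₁ - l ∈ D ∧ p₂ - l ∈ D := by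
    intro p₁ p₂ hne
    obtain ⟨⟨d, d'⟩, ⟨⟨hd, hd'⟩, hx⟩, huniq⟩ := hD (p₁ - p₂) (sub_ne_zero.mpr hne)
    simp only at hx
    refine ⟨p₁ - d, ⟨by simpa using hd, ?_⟩, ?_⟩
    · have h : p₂ - (p₁ - d) = d' := by linear_combination -hx
      rw [h]; exact hd'
    · intro l ⟨h1, h2⟩
      have := huniq (p₁ - l, p₂ - l) ⟨⟨h1, h2⟩, by ring⟩
      have h1' : p₁ - l = d := congrArg Prod.fst this
      linear_combination -h1'
  -- Part 2: two distinct lines meet in a unique point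
  have part2 : ∀ l₁ l₂ : ZMod (q ^ 2 + q + 1), l₁ ≠ l₂ →
      ∃! p : ZMod (q ^ 2 + q + 1), p - l₁ ∈ D ∧ p - l₂ ∈ D := by
    intro l₁ l₂ hne
    obtain ⟨⟨d, d'⟩, ⟨⟨hd, hd'⟩, hx⟩, huniq⟩ := hD (l₂ - l₁) (sub_ne_zero.mpr hne.symm)
    simp only at hx
    refine ⟨l₁ + d, ⟨by simpa using hd, ?_⟩, ?_⟩
    · have h : l₁ + d - l₂ = d' := by linear_combination -hx
      rw [h]; exact hd'
    · intro p ⟨h1, h2⟩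
      have := huniq (p - l₁, p - l₂) ⟨⟨h1, h2⟩, by ring⟩
      have h1' : p - l₁ = d := congrArg Prod.fst this
      linear_combination h1'
  refine ⟨part1, part2, ?_, ?_⟩
  · -- four points, no three collinear
    obtain ⟨P, hP, hPuniq⟩ := part2 0 1 zero_ne_one
    have hPerase : ∀ x : ZMod (q ^ 2 + q + 1), x ∈ D.erase P → x - (0 : ZMod (q ^ 2 + q + 1)) ∈ D ∧ x ≠ P := by
      intro x hx
      exact ⟨by simpa using Finset.mem_of_mem_erase hx, Finset.ne_of_mem_erase hx⟩
    set E : Finset (ZMod (q ^ 2 + q + 1)) := D.image (· + (1 : ZMod (q ^ 2 + q + 1))) with hE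
    have hEcard : E.card = q + 1 := by
      rw [hE, Finset.card_image_of_injective _ (add_left_injective 1), hcard]
    have hEmem : ∀ x : ZMod (q ^ 2 + q + 1), x ∈ E → x - (1 : ZMod (q ^ 2 + q + 1)) ∈ D := by
      intro x hx
      obtain ⟨d, hd, rfl⟩ := Finset.mem_image.mp hx
      simpa using hd
    have hcard2 : 1 < (D.erase P).card := by
      have := Finset.pred_card_le_card_erase (s := D) (a := P)
      omega
    have hcard3 : 1 < (E.erase P).card := by
      have := Finset.pred_card_le_card_erase (s := E) (a := P)
      omega
    obtain ⟨A, hA, B, hB, hAB⟩ := Finset.one_lt_card.mp hcard2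
    obtain ⟨C, hC, F, hF, hCF⟩ := Finset.one_lt_card.mp hcard3
    obtain ⟨hA0, hAP⟩ := hPerase A hA
    obtain ⟨hB0, hBP⟩ := hPerase B hB
    have hC1 : C - (1 : ZMod (q ^ 2 + q + 1)) ∈ D := hEmem C (Finset.mem_of_mem_erase hC)
    have hF1 : F - (1 : ZMod (q ^ 2 + q + 1)) ∈ D := hEmem F (Finset.mem_of_mem_erase hF)
    have hCP : C ≠ P := Finset.ne_of_mem_erase hC
    have hFP : F ≠ P := Finset.ne_of_mem_erase hF
    -- a point on both line 0 and line 1 is P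
    have key : ∀ x : ZMod (q ^ 2 + q + 1), x - (0:ZMod (q ^ 2 + q + 1)) ∈ D → x - (1:ZMod (q ^ 2 + q + 1)) ∈ D → x = P := by
      intro x h0 h1
      exact hPuniq x ⟨h0, h1⟩
    have hAC : A ≠ C := fun h => hCP (key C (h ▸ hA0) hC1)
    have hAF : A ≠ F := fun h => hFP (key F (h ▸ hA0) hF1)
    have hBC : B ≠ C := fun h => hCP (key C (h ▸ hB0) hC1)
    have hBF : B ≠ F := fun h => hFP (key F (h ▸ hB0) hF1)
    refine ⟨A, B, C, F, hAB, hAC, hAF, hBC, hBF, hCF, ?_⟩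
    intro l
    -- helper: if two distinct points both on line l and line m, then l = m
    have line_eq : ∀ x y l₁ l₂ : ZMod (q ^ 2 + q + 1), x ≠ y →
        x - l₁ ∈ D → y - l₁ ∈ D → x - l₂ ∈ D → y - l₂ ∈ D → l₁ = l₂ := by
      intro x y l₁ l₂ hxy h1 h2 h3 h4
      obtain ⟨m, _, hm⟩ := part1 x y hxy
      rw [hm l₁ ⟨h1, h2⟩, hm l₂ ⟨h3, h4⟩]
    refine ⟨?_, ?_, ?_, ?_⟩
    · rintro ⟨h1, h2, h3⟩
      have hl0 : l = 0 := line_eq A B l 0 hAB h1 h2 hA0 hB0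
      subst hl0
      exact hCP (key C h3 hC1)
    · rintro ⟨h1, h2, h3⟩
      have hl0 : l = 0 := line_eq A B l 0 hAB h1 h2 hA0 hB0
      subst hl0
      exact hFP (key F h3 hF1)
    · rintro ⟨h1, h2, h3⟩
      have hl1 : l = 1 := line_eq C F l 1 hCF h2 h3 hC1 hF1
      subst hl1
      exact hAP (key A hA0 h1)
    · rintro ⟨h1, h2, h3⟩
      have hl1 : l = 1 := line_eq C F l 1 hCF h2 h3 hC1 hF1
      subst hl1
      exact hBP (key B hB0 h1)
  · -- every line has q+1 points
    intro l
    have e : {p : ZMod (q ^ 2 + q + 1) // p - l ∈ D} ≃ {d : ZMod (q ^ 2 + q + 1) // d ∈ D} :=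
      { toFun := fun p => ⟨p.1 - l, p.2⟩
        invFun := fun d => ⟨d.1 + l, by simpa using d.2⟩
        left_inv := fun p => by ext; simp
        right_inv := fun d => by ext; simp }
    rw [Nat.card_congr e, Nat.card_eq_fintype_card, Fintype.card_coe, hcard]
end

section
/- Let G be a locally compact Hausdorff topological group which is unimodular, with Haar measure μ (so μ is a regular Borel measure on G that is both left-invariant and right-invariant, positive on nonempty open sets and finite on compact sets). Let H and K be compact open subgroups of G with H ⊆ K, and suppose there exists g ∈ G with g H g⁻¹ = K. Then H = K. -/
open MeasureTheory Pointwise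

/-!
A bi-invariant Haar measure is invariant under conjugation, so `μ K = μ (g H g⁻¹) = μ H`.
If `H` were a proper subgroup of `K`, then for `k ∈ K \ H` the coset `k H` would be disjoint
from `H` and contained in `K`, so `μ K ≥ 2 μ H`; as `0 < μ H < ∞` this is impossible.
-/

section

variable {G : Type*} [Group G] [MeasurableSpace G] (μ : Measure G)

theorem measure_preimage_conj [MeasurableMul G] [μ.IsMulLeftInvariant] [μ.IsMulRightInvariant]
    (g : G) (s : Set G) : μ ((fun x ↦ g * x * g⁻¹) ⁻¹' s) = μ s := by
  change μ ((fun x ↦ g * x) ⁻¹' ((fun x ↦ x * g⁻¹) ⁻¹' s)) = μ s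
  rw [measure_preimage_mul, measure_preimage_mul_right]

theorem Subgroup.measure_map_conj [MeasurableMul G] [μ.IsMulLeftInvariant] [μ.IsMulRightInvariant]
    (g : G) (H : Subgroup G) : μ (H.map (MulAut.conj g).toMonoidHom) = μ H := by
  rw [Subgroup.map_equiv_eq_comap_symm', Subgroup.coe_comap]
  simpa [funext (MulAut.conj_symm_apply g)] using measure_preimage_conj μ g⁻¹ H

theorem Subgroup.two_mul_measure_le_of_lt [μ.IsMulLeftInvariant] {H K : Subgroup G} (hHK : H < K)
    (hH : MeasurableSet (H : Set G)) : 2 * μ H ≤ μ K := by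
  obtain ⟨k, hkK, hkH⟩ := SetLike.exists_of_lt hHK
  have hdisj : Disjoint (k • (H : Set G)) H := by
    refine Set.disjoint_left.2 ?_
    rintro _ ⟨h, hh, rfl⟩ hkh
    exact hkH (by simpa using mul_mem hkh (inv_mem hh))
  have hsub : k • (H : Set G) ∪ H ⊆ K := by
    rintro _ (⟨h, hh, rfl⟩ | hh)
    exacts [mul_mem hkK (hHK.le hh), hHK.le hh]
  calc 2 * μ H = μ (k • (H : Set G)) + μ H := by rw [two_mul, measure_smul]
    _ = μ (k • (H : Set G) ∪ H) := (measure_union hdisj hH).symm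
    _ ≤ μ K := measure_mono hsub

theorem Subgroup.eq_of_le_of_measure_le [μ.IsMulLeftInvariant] {H K : Subgroup G} (hHK : H ≤ K)
    (hH : MeasurableSet (H : Set G)) (hH₀ : μ H ≠ 0) (hH_top : μ H ≠ ⊤)
    (hμ : μ K ≤ μ H) : H = K := by
  refine hHK.eq_of_not_lt fun hlt ↦ ?_
  have h2 := (Subgroup.two_mul_measure_le_of_lt μ hlt hH).trans hμ
  rw [two_mul] at h2
  exact (ENNReal.lt_add_right hH_top hH₀).not_ge h2

end

theorem compact_open_subgroup_eq_of_conj_eq_general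
    {G : Type*} [Group G] [TopologicalSpace G] [IsTopologicalGroup G]
    [MeasurableSpace G] [BorelSpace G]
    (μ : Measure G) [μ.IsHaarMeasure] [μ.IsMulRightInvariant]
    (H K : Subgroup G) (hHK : H ≤ K)
    (hHcompact : IsCompact (H : Set G)) (hHopen : IsOpen (H : Set G))
    (g : G) (hg : Subgroup.map (MulAut.conj g).toMonoidHom H = K) :
    H = K := by
  have hμ : μ K = μ H := hg ▸ H.measure_map_conj μ g
  exact H.eq_of_le_of_measure_le μ hHK hHopen.measurableSet
    (hHopen.measure_ne_zero μ ⟨1, H.one_mem⟩) hHcompact.measure_lt_top.ne hμ.le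

/-- In a unimodular locally compact Hausdorff group (with a Haar measure
that is both left- and right-invariant), if a compact open subgroup `H` is contained in a
compact open subgroup `K` and some conjugate of `H` equals `K`, then `H = K`. -/
theorem compact_open_subgroup_eq_of_conj_eq
    {G : Type*} [Group G] [TopologicalSpace G] [IsTopologicalGroup G]
    [LocallyCompactSpace G] [T2Space G] [MeasurableSpace G] [BorelSpace G]
    (μ : Measure G) [μ.IsHaarMeasure] [μ.IsMulRightInvariant] [μ.Regular]
    (H K : Subgroup G) (hHK : H ≤ K)
    (hHcompact : IsCompact (H : Set G)) (hHopen : IsOpen (H : Set G))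
    (hKcompact : IsCompact (K : Set G)) (hKopen : IsOpen (K : Set G))
    (g : G) (hg : Subgroup.map (MulAut.conj g).toMonoidHom H = K) :
    H = K :=
  compact_open_subgroup_eq_of_conj_eq_general μ H K hHK hHcompact hHopen g hg
end
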